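/- arXiv:2102.05570 — 9 statements merged into one kernel-verified Lean document; each statement's English description precedes it below -/
import Mathlib

section
/- Let ν be a probability distribution over linear orders on a finite set X and let P be the induced system of choice probabilities, P_A(x) = Σ_π ν(π)·1{π ranks x above all other elements of A}. Then for every x ∈ A ⊆ X, the Block–Marschak polynomial satisfies q(x,A) = ν(M_{x,A}), where M_{x,A} is the set of linear orders π such that π ranks all of X\A above x and x above all of A\{x}. -/
open Finset
open scoped Classical

/-- A linear order on a finite set `α`, encoded as a ranking bijection to `Fin (card α)`;
higher value means more preferred. -/
abbrev RankOrd (α : Type*) [Fintype α] := α ≃ Fin (Fintype.card α)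

variable {α : Type*} [Fintype α] [DecidableEq α]

/-- `ν` is a probability distribution over linear orders. -/
def IsDist [Fintype α] (ν : RankOrd α → ℝ) : Prop :=
  (∀ π, 0 ≤ ν π) ∧ ∑ π : RankOrd α, ν π = 1

/-- The choice probabilities induced by a distribution over linear orders. -/
noncomputable def choiceProb (ν : RankOrd α → ℝ) (A : Finset α) (x : α) : ℝ :=
  ∑ π : RankOrd α, if ∀ y ∈ A, y ≠ x → (π y : ℕ) < (π x : ℕ) then ν π else 0

/-- `ν` rationalizes the system of choice probabilities `P`. -/
def Rationalizes (ν : RankOrd α → ℝ) (P : Finset α → α → ℝ) : Prop :=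
  IsDist ν ∧ ∀ A : Finset α, A.Nonempty → ∀ x ∈ A, P A x = choiceProb ν A x

/-- The Block–Marschak polynomial `q(x,A)` of a system of choice probabilities `P`. -/
noncomputable def bm (P : Finset α → α → ℝ) (x : α) (A : Finset α) : ℝ :=
  ∑ A' ∈ Finset.univ.powerset.filter (fun A' => A ⊆ A'),
    (-1 : ℝ) ^ (A' \ A).card * P A' x

/-- A path: a maximal chain `X = A_0 ⊋ A_1 ⊋ ⋯ ⊋ A_{|X|} = ∅` decreasing by one element. -/
def IsPath (ρ : ℕ → Finset α) : Prop :=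
  ρ 0 = Finset.univ ∧ ρ (Fintype.card α) = ∅ ∧
    ∀ i < Fintype.card α, ρ (i + 1) ⊆ ρ i ∧ (ρ i \ ρ (i + 1)).card = 1

/-- A supported path: all Block–Marschak edge weights along it are strictly positive. -/
def SupportedPath (P : Finset α → α → ℝ) (ρ : ℕ → Finset α) : Prop :=
  IsPath ρ ∧ ∀ i < Fintype.card α, ∀ x ∈ ρ i \ ρ (i + 1), 0 < bm P x (ρ i)

/-- Two paths are branching: they agree on a consecutive block of nodes
`{i,…,j} ⊆ {1,…,|X|-1}` while differing at positions `i-1` and `j+1`. -/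
def BranchingPair (ρ ρ' : ℕ → Finset α) : Prop :=
  ∃ i j, 1 ≤ i ∧ i ≤ j ∧ j ≤ Fintype.card α - 1 ∧
    ρ (i - 1) ≠ ρ' (i - 1) ∧ ρ (j + 1) ≠ ρ' (j + 1) ∧
    ∀ m, i ≤ m → m ≤ j → ρ m = ρ' m

/-- The path associated with the linear order `π`: `A_i` is `X` minus the top `i` elements. -/
def pathOf (π : RankOrd α) : ℕ → Finset α :=
  fun i => Finset.univ.filter (fun w => (π w : ℕ) < Fintype.card α - i)

/-- The weak upper contour set of `x` according to `π`. -/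
def upper (π : RankOrd α) (x : α) : Finset α :=
  Finset.univ.filter (fun w => (π x : ℕ) ≤ (π w : ℕ))

/-- `π ∈ M_{x,A}`: `π` ranks `X \ A` above `x` and `x` above `A \ {x}`. -/
def inM (π : RankOrd α) (x : α) (A : Finset α) : Prop :=
  (∀ z, z ∉ A → (π x : ℕ) < (π z : ℕ)) ∧ ∀ y ∈ A, y ≠ x → (π y : ℕ) < (π x : ℕ)

lemma sum_pow_neg_one_real {β : Type*} [DecidableEq β] {s : Finset β} (h : s.Nonempty) :
    (∑ m ∈ s.powerset, (-1 : ℝ) ^ m.card) = 0 := by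
  have := Finset.sum_powerset_neg_one_pow_card_of_nonempty (x := s) h
  have : ((∑ m ∈ s.powerset, (-1 : ℤ) ^ m.card : ℤ) : ℝ) = 0 := by rw [this]; simp
  push_cast at this
  exact this

/-- If `P` is induced by the distribution `ν` over linear orders, then the Block–Marschak
polynomial satisfies `q(x,A) = ν(M_{x,A})` for every `x ∈ A ⊆ X`. -/
theorem bm_eq_measure_M {α : Type*} [Fintype α] [DecidableEq α]
    (ν : RankOrd α → ℝ) (hν : IsDist ν) (A : Finset α) (x : α) (hx : x ∈ A) :
    bm (choiceProb ν) x A = ∑ π ∈ Finset.univ.filter (fun π => inM π x A), ν π := by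
  classical
  unfold bm choiceProb
  simp_rw [Finset.mul_sum]
  rw [Finset.sum_comm, Finset.sum_filter]
  apply Finset.sum_congr rfl
  intro π _
  set C : Finset α := insert x (Finset.univ.filter (fun y => (π y : ℕ) < (π x : ℕ))) with hC
  have hcond : ∀ A' : Finset α,
      (∀ y ∈ A', y ≠ x → (π y : ℕ) < (π x : ℕ)) ↔ A' ⊆ C := by
    intro A'
    constructor
    · intro h y hy
      by_cases hyx : y = x
      · simp [hC, hyx]
      · simp only [hC, Finset.mem_insert, Finset.mem_filter, Finset.mem_univ, true_and]
        exact Or.inr (h y hy hyx)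
    · intro h y hy hyx
      have := h hy
      simp only [hC, Finset.mem_insert, Finset.mem_filter, Finset.mem_univ, true_and] at this
      tauto
  have hM : inM π x A ↔ C = A := by
    constructor
    · rintro ⟨h1, h2⟩
      apply Finset.Subset.antisymm
      · intro z hz
        simp only [hC, Finset.mem_insert, Finset.mem_filter, Finset.mem_univ, true_and] at hz
        rcases hz with rfl | hz
        · exact hx
        · by_contra hzA
          exact absurd (h1 z hzA) (by omega)
      · intro y hy
        by_cases hyx : y = x
        · simp [hC, hyx]
        · simp only [hC, Finset.mem_insert, Finset.mem_filter, Finset.mem_univ, true_and]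
          exact Or.inr (h2 y hy hyx)
    · intro hCA
      constructor
      · intro z hz
        have : z ∉ C := hCA ▸ hz
        simp only [hC, Finset.mem_insert, Finset.mem_filter, Finset.mem_univ, true_and,
          not_or] at this
        have hne : π z ≠ π x := fun h => this.1 (π.injective h)
        omega
      · intro y hy hyx
        have : y ∈ C := hCA ▸ hy
        simp only [hC, Finset.mem_insert, Finset.mem_filter, Finset.mem_univ, true_and] at this
        tauto
  simp_rw [hcond]
  by_cases hm : inM π x A
  · rw [if_pos hm]
    have hCA : C = A := hM.mp hm
    rw [Finset.sum_eq_single_of_mem A (by simp)]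
    · simp [hCA]
    · intro A' hA' hne
      simp only [Finset.mem_filter, Finset.mem_powerset] at hA'
      rw [if_neg, mul_zero]
      intro hsub
      exact hne (Finset.Subset.antisymm (hCA ▸ hsub) hA'.2)
  · rw [if_neg hm]
    by_cases hAC : A ⊆ C
    · -- A ⊊ C; reindex by T = A' \ A over (C \ A).powerset
      have hCne : C ≠ A := fun h => hm (hM.mpr h)
      have hne : (C \ A).Nonempty := by
        rw [Finset.sdiff_nonempty]
        intro h
        exact hCne (Finset.Subset.antisymm h hAC)
      simp_rw [mul_ite, mul_zero, ← Finset.sum_filter, Finset.filter_filter]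
      rw [Finset.sum_nbij' (i := fun A' => A' \ A) (j := fun T => A ∪ T)
        (t := (C \ A).powerset) (g := fun T => (-1 : ℝ) ^ T.card * ν π)]
      · rw [← Finset.sum_mul, sum_pow_neg_one_real hne, zero_mul]
      · intro A' hA'
        simp only [Finset.mem_filter, Finset.mem_powerset] at hA' ⊢
        exact Finset.sdiff_subset_sdiff hA'.2.2 le_rfl
      · intro T hT
        simp only [Finset.mem_powerset] at hT
        simp only [Finset.mem_filter, Finset.mem_powerset]
        refine ⟨Finset.union_subset (Finset.subset_univ A) (Finset.subset_univ T),
          Finset.subset_union_left, Finset.union_subset hAC (hT.trans Finset.sdiff_subset)⟩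
      · intro A' hA'
        simp only [Finset.mem_filter, Finset.mem_powerset] at hA'
        exact Finset.union_sdiff_of_subset hA'.2.1
      · intro T hT
        simp only [Finset.mem_powerset] at hT
        rw [Finset.union_sdiff_cancel_left]
        exact Finset.disjoint_left.mpr fun a haA haT =>
          (Finset.mem_sdiff.mp (hT haT)).2 haA
      · intro A' hA'
        rfl
    · -- no A' qualifies
      apply Finset.sum_eq_zero
      intro A' hA'
      simp only [Finset.mem_filter, Finset.mem_powerset] at hA'
      rw [if_neg, mul_zero]
      exact fun hsub => hAC (hA'.2.trans hsub)
end

section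
/- Two distinct distributions ν₁ and ν₂ over linear orders on X induce the same system of choice probabilities if and only if ν₁(M_{x,A}) = ν₂(M_{x,A}) for all x ∈ A ⊆ X, where M_{x,A} is the set of linear orders ranking X\A above x and x above A\{x}. -/
open Finset
open scoped Classical

variable {α : Type*} [Fintype α] [DecidableEq α]

lemma choice_eq_sum_M (ν : RankOrd α → ℝ) (A : Finset α) (x : α) (hx : x ∈ A) :
    choiceProb ν A x =
      ∑ B ∈ Finset.univ.powerset.filter (fun B => A ⊆ B),
        ∑ π ∈ Finset.univ.filter (fun π => inM π x B), ν π := by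
  classical
  unfold choiceProb
  rw [← Finset.sum_filter]
  set g : RankOrd α → Finset α := fun π => Finset.univ.filter (fun w => (π w : ℕ) ≤ (π x : ℕ))
    with hg
  have hmaps : ∀ π ∈ Finset.univ.filter
      (fun π : RankOrd α => ∀ y ∈ A, y ≠ x → (π y : ℕ) < (π x : ℕ)),
      g π ∈ Finset.univ.powerset.filter (fun B => A ⊆ B) := by
    intro π hπ
    simp only [Finset.mem_filter, Finset.mem_univ, true_and] at hπ ⊢
    refine ⟨Finset.mem_powerset.2 (Finset.subset_univ _), ?_⟩
    intro y hy
    simp only [hg, Finset.mem_filter, Finset.mem_univ, true_and]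
    by_cases hyx : y = x
    · simp [hyx]
    · exact le_of_lt (hπ y hy hyx)
  rw [← Finset.sum_fiberwise_of_maps_to hmaps ν]
  refine Finset.sum_congr rfl ?_
  intro B hB
  simp only [Finset.mem_filter, Finset.mem_powerset] at hB
  congr 1
  ext π
  simp only [Finset.mem_filter, Finset.mem_univ, true_and]; simp only [inM]
  constructor
  · intro ⟨h1, h2⟩
    constructor
    · intro z hz
      by_contra h
      push_neg at h
      have : z ∈ g π := by
        simp only [hg, Finset.mem_filter, Finset.mem_univ, true_and]; exact h
      exact hz (h2 ▸ this)
    · intro y hy hyx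
      have : y ∈ g π := h2 ▸ hy
      simp only [hg, Finset.mem_filter, Finset.mem_univ, true_and] at this
      rcases lt_or_eq_of_le this with h | h
      · exact h
      · exact absurd (π.injective (Fin.ext h)) hyx
  · intro ⟨h1, h2⟩
    constructor
    · intro y hy hyx
      exact h2 y (hB.2 hy) hyx
    · ext z
      simp only [hg, Finset.mem_filter, Finset.mem_univ, true_and]
      constructor
      · intro h
        by_contra hz
        exact absurd h (not_le.2 (h1 z hz))
      · intro h
        by_cases hzx : z = x
        · simp [hzx]
        · exact le_of_lt (h2 z h hzx)

lemma M_eq_of_choice_eq (ν₁ ν₂ : RankOrd α → ℝ)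
    (hP : ∀ A : Finset α, ∀ x ∈ A, choiceProb ν₁ A x = choiceProb ν₂ A x) :
    ∀ A : Finset α, ∀ x ∈ A,
      ∑ π ∈ Finset.univ.filter (fun π => inM π x A), ν₁ π =
      ∑ π ∈ Finset.univ.filter (fun π => inM π x A), ν₂ π := by
  classical
  suffices H : ∀ n : ℕ, ∀ A : Finset α, (Finset.univ \ A).card = n → ∀ x ∈ A,
      ∑ π ∈ Finset.univ.filter (fun π => inM π x A), ν₁ π =
      ∑ π ∈ Finset.univ.filter (fun π => inM π x A), ν₂ π by
    intro A x hx; exact H _ A rfl x hx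
  intro n
  induction n using Nat.strong_induction_on with
  | _ n ih =>
    intro A hA x hx
    have h1 := choice_eq_sum_M ν₁ A x hx
    have h2 := choice_eq_sum_M ν₂ A x hx
    have hmem : A ∈ Finset.univ.powerset.filter (fun B => A ⊆ B) := by
      simp [Finset.mem_powerset]
    rw [← Finset.add_sum_erase _ _ hmem] at h1 h2
    have hrest : ∑ B ∈ (Finset.univ.powerset.filter (fun B => A ⊆ B)).erase A,
        ∑ π ∈ Finset.univ.filter (fun π => inM π x B), ν₁ π =
        ∑ B ∈ (Finset.univ.powerset.filter (fun B => A ⊆ B)).erase A,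
        ∑ π ∈ Finset.univ.filter (fun π => inM π x B), ν₂ π := by
      refine Finset.sum_congr rfl ?_
      intro B hB
      simp only [Finset.mem_erase, Finset.mem_filter, Finset.mem_powerset] at hB
      have hss : A ⊂ B := lt_of_le_of_ne hB.2.2 (Ne.symm hB.1)
      have hcard : (Finset.univ \ B).card < n := by
        rw [← hA]
        apply Finset.card_lt_card
        obtain ⟨y, hyB, hyA⟩ := Finset.exists_of_ssubset hss
        refine (Finset.ssubset_iff_of_subset
          (Finset.sdiff_subset_sdiff Finset.Subset.rfl hss.subset)).2 ⟨y, ?_, ?_⟩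
        · simp [hyA]
        · simp [hyB]
      exact ih _ hcard B rfl x (hss.subset hx)
    have := hP A x hx
    rw [h1, h2] at this
    linarith

/-- Two distinct distributions over linear orders induce the same system of choice
probabilities iff they assign the same weight to every set `M_{x,A}`. -/
theorem same_choice_iff_same_M {α : Type*} [Fintype α] [DecidableEq α]
    (ν₁ ν₂ : RankOrd α → ℝ) (h₁ : IsDist ν₁) (h₂ : IsDist ν₂) (hne : ν₁ ≠ ν₂) :
    (∀ A : Finset α, ∀ x ∈ A, choiceProb ν₁ A x = choiceProb ν₂ A x) ↔
      (∀ A : Finset α, ∀ x ∈ A,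
        ∑ π ∈ Finset.univ.filter (fun π => inM π x A), ν₁ π =
        ∑ π ∈ Finset.univ.filter (fun π => inM π x A), ν₂ π) := by
  constructor
  · exact M_eq_of_choice_eq ν₁ ν₂
  · intro hM A x hx
    rw [choice_eq_sum_M ν₁ A x hx, choice_eq_sum_M ν₂ A x hx]
    refine Finset.sum_congr rfl ?_
    intro B hB
    simp only [Finset.mem_filter, Finset.mem_powerset] at hB
    exact hM B x (hB.2 hx)
end

section
/- Let X = {a,b,c,d}. Define ν₁ to put weight 1/2 on each of the orders a≻b≻c≻d and b≻a≻d≻c, and ν₂ to put weight 1/2 on each of a≻b≻d≻c and b≻a≻c≻d. Then ν₁ and ν₂ induce the same system of choice probabilities, i.e., for every nonempty A ⊆ X and x ∈ A, Σ_π ν₁(π)·1{x is π-maximal in A} = Σ_π ν₂(π)·1{x is π-maximal in A}, yet ν₁ ≠ ν₂ (indeed their supports are disjoint). -/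
open Finset
open scoped Classical

/-- Choice probabilities on `X = Fin 4` induced by a distribution over linear orders
(encoded as ranking bijections `Fin 4 ≃ Fin 4`, higher value = more preferred). -/
noncomputable def cp4 (ν : (Fin 4 ≃ Fin 4) → ℝ) (A : Finset (Fin 4)) (x : Fin 4) : ℝ :=
  ∑ π : Fin 4 ≃ Fin 4, if ∀ y ∈ A, y ≠ x → (π y : ℕ) < (π x : ℕ) then ν π else 0

-- with a = 0, b = 1, c = 2, d = 3:
/-- The order `a ≻ b ≻ c ≻ d`. -/
def oABCD : Fin 4 ≃ Fin 4 := ⟨![3,2,1,0], ![3,2,1,0], by decide, by decide⟩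
/-- The order `b ≻ a ≻ d ≻ c`. -/
def oBADC : Fin 4 ≃ Fin 4 := ⟨![2,3,0,1], ![2,3,0,1], by decide, by decide⟩
/-- The order `a ≻ b ≻ d ≻ c`. -/
def oABDC : Fin 4 ≃ Fin 4 := ⟨![3,2,0,1], ![2,3,1,0], by decide, by decide⟩
/-- The order `b ≻ a ≻ c ≻ d`. -/
def oBACD : Fin 4 ≃ Fin 4 := ⟨![2,3,1,0], ![3,2,0,1], by decide, by decide⟩

/-- `ν₁` puts weight `1/2` on each of `a≻b≻c≻d` and `b≻a≻d≻c`. -/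
noncomputable def nu1 : (Fin 4 ≃ Fin 4) → ℝ :=
  fun π => if π = oABCD ∨ π = oBADC then 1/2 else 0

/-- `ν₂` puts weight `1/2` on each of `a≻b≻d≻c` and `b≻a≻c≻d`. -/
noncomputable def nu2 : (Fin 4 ≃ Fin 4) → ℝ :=
  fun π => if π = oABDC ∨ π = oBACD then 1/2 else 0

lemma cp_two (p1 p2 : Fin 4 ≃ Fin 4) (h : p1 ≠ p2) (A : Finset (Fin 4)) (x : Fin 4) :
    cp4 (fun π => if π = p1 ∨ π = p2 then 1/2 else 0) A x
      = (if ∀ y ∈ A, y ≠ x → (p1 y : ℕ) < (p1 x : ℕ) then (1:ℝ)/2 else 0)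
      + (if ∀ y ∈ A, y ≠ x → (p2 y : ℕ) < (p2 x : ℕ) then (1:ℝ)/2 else 0) := by
  unfold cp4
  rw [← Finset.sum_subset (Finset.subset_univ ({p1, p2} : Finset (Fin 4 ≃ Fin 4)))
    (by intro π _ hπ; simp only [Finset.mem_insert, Finset.mem_singleton, not_or] at hπ
        simp [hπ.1, hπ.2])]
  rw [Finset.sum_pair h]
  simp [h]

lemma nat_key : ∀ A : Finset (Fin 4), ∀ x : Fin 4,
    (((if ∀ y ∈ A, y ≠ x → (oABCD y : ℕ) < (oABCD x : ℕ) then 1 else 0)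
      + (if ∀ y ∈ A, y ≠ x → (oBADC y : ℕ) < (oBADC x : ℕ) then 1 else 0) : ℕ)
    = ((if ∀ y ∈ A, y ≠ x → (oABDC y : ℕ) < (oABDC x : ℕ) then 1 else 0)
      + (if ∀ y ∈ A, y ≠ x → (oBACD y : ℕ) < (oBACD x : ℕ) then 1 else 0) : ℕ)) := by
  decide

lemma half_ind (P Q : Prop) [Decidable P] [Decidable Q] :
    (if P then (1:ℝ)/2 else 0) + (if Q then (1:ℝ)/2 else 0)
    = (((if P then 1 else 0) + (if Q then 1 else 0) : ℕ) : ℝ) / 2 := by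
  split_ifs <;> norm_num

/-- Fishburn's counterexample: `ν₁` and `ν₂` induce the same system of choice
probabilities, yet `ν₁ ≠ ν₂`, and indeed their supports are disjoint. -/
theorem fishburn_counterexample :
    (∀ A : Finset (Fin 4), A.Nonempty → ∀ x ∈ A, cp4 nu1 A x = cp4 nu2 A x) ∧
    nu1 ≠ nu2 ∧ (∀ π : Fin 4 ≃ Fin 4, ¬ (0 < nu1 π ∧ 0 < nu2 π)) := by
  constructor
  · intro A _ x _
    show cp4 (fun π => if π = oABCD ∨ π = oBADC then 1/2 else 0) A x
       = cp4 (fun π => if π = oABDC ∨ π = oBACD then 1/2 else 0) A x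
    rw [cp_two oABCD oBADC (by decide), cp_two oABDC oBACD (by decide),
      half_ind, half_ind, nat_key A x]
  constructor
  · intro h
    have h1 : nu1 oABCD = nu2 oABCD := by rw [h]
    have h2 : ¬ (oABCD = oABDC ∨ oABCD = oBACD) := by decide
    simp [nu1, nu2, h2] at h1
  · rintro π ⟨h1, h2⟩
    unfold nu1 at h1; unfold nu2 at h2
    split_ifs at h1 h2 with c1 c2
    · rcases c1 with rfl | rfl <;> revert c2 <;> decide
    · exact lt_irrefl 0 h2
    · exact lt_irrefl 0 h1
    · exact lt_irrefl 0 h1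
end

section
/- If |X| ≤ 3, then any two distributions over linear orders on X that induce the same system of choice probabilities are equal; i.e., the random utility model is identified on sets of at most three alternatives. -/
/-!
For `x ≠ y`, an order picks `y` from `X \ {x}` exactly when it picks `y` from `X` or ranks `x`
first and `y` second. Hence `P(X \ {x}, y) - P(X, y)` is the total weight of the orders with top
two elements `x, y`, and when `|X| ≤ 3` the top two elements determine the order, so this
difference is `ν π` for the order `π` with those top two. For `|X| ≤ 1` there is a single order,
of weight `1`.
-/

open Finset
open scoped Classical

variable {α : Type*} [Fintype α] [DecidableEq α]

namespace Equiv

variable {β γ : Type*}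

theorem eq_of_eqOn_of_subsingleton_compl (e f : β ≃ γ) {s : Set β} (hs : sᶜ.Subsingleton)
    (h : Set.EqOn e f s) : e = f := by
  ext b
  by_cases hb : b ∈ s
  · exact h hb
  by_contra hne
  set c := f.symm (e b)
  have hcb : c ≠ b := fun hcb => hne ((f.apply_symm_apply (e b)).symm.trans (congrArg f hcb))
  have hc : c ∈ s := by_contra fun hc => hcb (hs hc hb)
  exact hcb (e.injective (by rw [h hc, f.apply_symm_apply]))

variable [LinearOrder γ]

theorem le_apply_of_forall_ne_lt (e : β ≃ γ) {x : β} (h : ∀ z, z ≠ x → e z < e x) (c : γ) :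
    c ≤ e x := by
  obtain ⟨z, rfl⟩ := e.surjective c
  by_cases hz : z = x
  · rw [hz]
  · exact (h z hz).le

theorem le_apply_of_forall_ne_ne_lt (e : β ≃ γ) {x y : β}
    (h : ∀ z, z ≠ x → z ≠ y → e z < e y) (c : γ) (hc : c ≠ e x) : c ≤ e y := by
  obtain ⟨z, rfl⟩ := e.surjective c
  by_cases hz : z = y
  · rw [hz]
  · exact (h z (fun hzx => hc (by rw [hzx])) hz).le

end Equiv

theorem Set.subsingleton_compl_pair_of_card_le_three {α : Type*} [Fintype α] {x y : α}
    (hα : Fintype.card α ≤ 3) (hxy : x ≠ y) : ({x, y} : Set α)ᶜ.Subsingleton := by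
  have hcard : (({x, y} : Finset α)ᶜ).card ≤ 1 := by
    rw [Finset.card_compl, Finset.card_pair hxy]
    omega
  intro a ha b hb
  exact Finset.card_le_one.mp hcard a (by simpa using ha) b (by simpa using hb)

def RanksTopTwo {α : Type*} [Fintype α] (π : RankOrd α) (x y : α) : Prop :=
  π y < π x ∧ ∀ z, z ≠ x → z ≠ y → π z < π y

namespace RanksTopTwo

variable {α : Type*} [Fintype α] {π σ : RankOrd α} {x y : α}

theorem ne (hπ : RanksTopTwo π x y) : x ≠ y := fun hxy => (hπ.1.ne (by rw [hxy])).elim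

theorem apply_lt_apply_fst (hπ : RanksTopTwo π x y) (z : α) (hz : z ≠ x) : π z < π x := by
  by_cases hzy : z = y
  · exact hzy ▸ hπ.1
  · exact (hπ.2 z hz hzy).trans hπ.1

theorem eq_of_card_le_three (hα : Fintype.card α ≤ 3) (hπ : RanksTopTwo π x y)
    (hσ : RanksTopTwo σ x y) : π = σ := by
  have hx : π x = σ x :=
    le_antisymm (σ.le_apply_of_forall_ne_lt hσ.apply_lt_apply_fst _)
      (π.le_apply_of_forall_ne_lt hπ.apply_lt_apply_fst _)
  have hy : π y = σ y :=
    le_antisymm (σ.le_apply_of_forall_ne_ne_lt hσ.2 _ (hx ▸ hπ.1.ne))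
      (π.le_apply_of_forall_ne_ne_lt hπ.2 _ (hx ▸ hσ.1.ne))
  refine π.eq_of_eqOn_of_subsingleton_compl σ
    (Set.subsingleton_compl_pair_of_card_le_three hα hπ.ne) ?_
  rintro z (rfl | rfl)
  exacts [hx, hy]

end RanksTopTwo

theorem exists_ranksTopTwo {α : Type*} [Fintype α] (π : RankOrd α) (hα : 2 ≤ Fintype.card α) :
    ∃ x y, RanksTopTwo π x y := by
  refine ⟨π.symm ⟨Fintype.card α - 1, by omega⟩, π.symm ⟨Fintype.card α - 2, by omega⟩, ?_, ?_⟩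
  · simp only [Equiv.apply_symm_apply, Fin.mk_lt_mk]
    omega
  · intro z hx hy
    rw [Ne, Equiv.eq_symm_apply, Fin.ext_iff] at hx hy
    simp only [Equiv.apply_symm_apply, Fin.lt_def] at hx hy ⊢
    have := (π z).isLt
    omega

theorem choiceProb_erase_eq_add (ν : RankOrd α → ℝ) {x y : α} (hxy : x ≠ y) :
    choiceProb ν (univ.erase x) y =
      choiceProb ν univ y + ∑ π ∈ univ.filter (RanksTopTwo · x y), ν π := by
  rw [sum_filter, choiceProb, choiceProb, ← sum_add_distrib]
  refine sum_congr rfl fun π _ => ?_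
  simp only [mem_erase, mem_univ, and_true, true_implies, RanksTopTwo, Fin.val_fin_lt]
  have hπ : π x ≠ π y := π.injective.ne hxy
  split_ifs <;> grind

theorem apply_eq_choiceProb_erase_sub (hα : Fintype.card α ≤ 3) (ν : RankOrd α → ℝ)
    {π : RankOrd α} {x y : α} (hπ : RanksTopTwo π x y) :
    ν π = choiceProb ν (univ.erase x) y - choiceProb ν univ y := by
  have hfilter : univ.filter (RanksTopTwo · x y) = {π} :=
    eq_singleton_iff_unique_mem.mpr
      ⟨mem_filter.mpr ⟨mem_univ π, hπ⟩,
        fun σ hσ => (mem_filter.mp hσ).2.eq_of_card_le_three hα hπ⟩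
  rw [choiceProb_erase_eq_add ν hπ.ne, hfilter, sum_singleton]
  ring

theorem IsDist.apply_eq_one [Subsingleton α] {ν : RankOrd α → ℝ} (hν : IsDist ν)
    (π : RankOrd α) : ν π = 1 := by
  rw [← hν.2, Fintype.sum_subsingleton ν π]

/-- On a set of at most three alternatives, the random utility model is identified:
two distributions over linear orders inducing the same choice probabilities are equal. -/
theorem identified_of_card_le_three {α : Type*} [Fintype α] [DecidableEq α]
    (h : Fintype.card α ≤ 3) (ν₁ ν₂ : RankOrd α → ℝ)
    (h₁ : IsDist ν₁) (h₂ : IsDist ν₂)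
    (hsame : ∀ A : Finset α, A.Nonempty → ∀ x ∈ A,
      choiceProb ν₁ A x = choiceProb ν₂ A x) :
    ν₁ = ν₂ := by
  funext π
  rcases le_or_gt (Fintype.card α) 1 with hle | hgt
  · have : Subsingleton α := Fintype.card_le_one_iff_subsingleton.mp hle
    rw [h₁.apply_eq_one π, h₂.apply_eq_one π]
  obtain ⟨x, y, hπ⟩ := exists_ranksTopTwo π hgt
  have hyx : y ∈ univ.erase x := mem_erase.mpr ⟨hπ.ne.symm, mem_univ y⟩
  rw [apply_eq_choiceProb_erase_sub h ν₁ hπ, apply_eq_choiceProb_erase_sub h ν₂ hπ,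
    hsame _ ⟨y, hyx⟩ y hyx, hsame univ ⟨y, mem_univ y⟩ y (mem_univ y)]
end

section
/- (Inflow equals outflow) Let ν be a distribution over linear orders on X inducing choice probabilities P, and let q(x,A) be the Block–Marschak polynomials. Then for every set A with ∅ ⊊ A ⊊ X, the total inflow equals the total outflow on the probability flow diagram: Σ_{y ∈ X\A} q(y, A∪{y}) = Σ_{x ∈ A} q(x, A). -/
open Finset
open scoped Classical

variable {α : Type*} [Fintype α] [DecidableEq α]

section Aux

set_option maxRecDepth 8000
set_option maxHeartbeats 1000000

variable {α : Type*} [Fintype α] [DecidableEq α]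

/-- The weak lower contour set of `x` according to `π`. -/
noncomputable def Lset (π : RankOrd α) (x : α) : Finset α :=
  Finset.univ.filter (fun w => (π w : ℕ) ≤ (π x : ℕ))

lemma incl_excl (A L : Finset α) :
    ∑ A' ∈ Finset.univ.powerset.filter (fun A' => A ⊆ A'),
      (-1 : ℝ) ^ (A' \ A).card * (if A' ⊆ L then (1:ℝ) else 0)
      = if L = A then 1 else 0 := by
  have himg : Finset.univ.powerset.filter (fun A' => A ⊆ A')
      = (Aᶜ).powerset.image (fun S => A ∪ S) := by
    ext B
    simp only [Finset.mem_filter, Finset.mem_powerset, Finset.mem_image]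
    constructor
    · rintro ⟨-, hAB⟩
      exact ⟨B \ A, by simp [Finset.subset_iff], by rw [Finset.union_sdiff_self_eq_union,
        Finset.union_eq_right.2 hAB]⟩
    · rintro ⟨S, -, rfl⟩
      exact ⟨Finset.subset_univ _, Finset.subset_union_left⟩
  rw [himg, Finset.sum_image (by
    intro S hS T hT h
    have hS' : Disjoint A S := Finset.disjoint_left.2 fun a ha hb =>
      (Finset.mem_compl.1 (Finset.mem_powerset.1 hS hb)) ha
    have hT' : Disjoint A T := Finset.disjoint_left.2 fun a ha hb =>
      (Finset.mem_compl.1 (Finset.mem_powerset.1 hT hb)) ha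
    have h : A ∪ S = A ∪ T := h
    rw [← Finset.union_sdiff_cancel_left hS', h, Finset.union_sdiff_cancel_left hT'])]
  have hterm : ∀ S ∈ (Aᶜ).powerset,
      (-1 : ℝ) ^ ((A ∪ S) \ A).card * (if A ∪ S ⊆ L then (1:ℝ) else 0)
      = (if A ⊆ L then 1 else 0) * (if S ⊆ L then (-1 : ℝ) ^ S.card else 0) := by
    intro S hS
    have hd : Disjoint A S := Finset.disjoint_left.2 fun a ha hb =>
      (Finset.mem_compl.1 (Finset.mem_powerset.1 hS hb)) ha
    rw [Finset.union_sdiff_cancel_left hd]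
    by_cases h1 : A ⊆ L <;> by_cases h2 : S ⊆ L <;>
      simp [h1, h2, Finset.union_subset_iff]
  rw [Finset.sum_congr rfl hterm, ← Finset.mul_sum]
  by_cases h1 : A ⊆ L
  · simp only [h1, if_true, one_mul]
    rw [← Finset.sum_filter]
    have hps : (Aᶜ).powerset.filter (fun S => S ⊆ L) = (Aᶜ ∩ L).powerset := by
      ext S
      simp only [Finset.mem_filter, Finset.mem_powerset, Finset.subset_inter_iff]
    rw [hps]
    have hz : ∑ S ∈ (Aᶜ ∩ L).powerset, (-1 : ℝ) ^ S.card
        = ((∑ S ∈ (Aᶜ ∩ L).powerset, (-1 : ℤ) ^ S.card : ℤ) : ℝ) := by push_cast; rfl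
    rw [hz, Finset.sum_powerset_neg_one_pow_card]
    have hiff : Aᶜ ∩ L = ∅ ↔ L = A := by
      constructor
      · intro h
        refine Finset.Subset.antisymm (fun w hw => ?_) h1
        by_contra hw'
        exact Finset.notMem_empty w (h ▸ Finset.mem_inter.2 ⟨Finset.mem_compl.2 hw', hw⟩)
      · rintro rfl; ext w; simp [Finset.mem_inter]
    by_cases h : Aᶜ ∩ L = ∅
    · rw [if_pos h, if_pos (hiff.1 h)]; norm_num
    · rw [if_neg h, if_neg (fun hc => h (hiff.2 hc))]; norm_num
  · have hLA : ¬ L = A := fun h => h1 (h ▸ Finset.Subset.refl L)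
    rw [if_neg h1, if_neg hLA, zero_mul]

lemma cond_iff_subset_Lset (π : RankOrd α) (x : α) (A' : Finset α) :
    (∀ y ∈ A', y ≠ x → (π y : ℕ) < (π x : ℕ)) ↔ A' ⊆ Lset π x := by
  constructor
  · intro h y hy
    simp only [Lset, Finset.mem_filter, Finset.mem_univ, true_and]
    rcases eq_or_ne y x with rfl | hne
    · exact le_refl _
    · exact (h y hy hne).le
  · intro h y hy hne
    have h2 := Finset.mem_filter.1 (h hy) |>.2
    rcases lt_or_eq_of_le h2 with h' | h'
    · exact h'
    · exact absurd (π.injective (Fin.val_injective h')) hne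

lemma bm_eq (ν : RankOrd α → ℝ) (x : α) (A : Finset α) :
    bm (choiceProb ν) x A = ∑ π : RankOrd α, if Lset π x = A then ν π else 0 := by
  unfold bm choiceProb
  simp_rw [Finset.mul_sum]
  rw [Finset.sum_comm]
  refine Finset.sum_congr rfl fun π _ => ?_
  have hstep : ∀ A' ∈ Finset.univ.powerset.filter (fun A' => A ⊆ A'),
      (-1 : ℝ) ^ (A' \ A).card *
        (if ∀ y ∈ A', y ≠ x → (π y : ℕ) < (π x : ℕ) then ν π else 0)
      = ((-1 : ℝ) ^ (A' \ A).card * (if A' ⊆ Lset π x then (1:ℝ) else 0)) * ν π := by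
    intro A' _
    rw [if_congr (cond_iff_subset_Lset π x A') rfl rfl]
    by_cases h : A' ⊆ Lset π x
    · rw [if_pos h, if_pos h]; ring
    · rw [if_neg h, if_neg h]; ring
  rw [Finset.sum_congr rfl hstep, ← Finset.sum_mul, incl_excl]
  by_cases h : Lset π x = A
  · rw [if_pos h, if_pos h, one_mul]
  · rw [if_neg h, if_neg h, zero_mul]

lemma card_Lset (π : RankOrd α) (x : α) : (Lset π x).card = (π x : ℕ) + 1 := by
  have himg : Lset π x = Finset.image π.symm (Finset.Iic (π x)) := by
    ext w
    simp only [Lset, Finset.mem_filter, Finset.mem_univ, true_and, Finset.mem_image,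
      Finset.mem_Iic]
    constructor
    · intro h; exact ⟨π w, by rwa [Fin.le_def], by simp⟩
    · rintro ⟨i, hi, rfl⟩
      rw [Equiv.apply_symm_apply]
      exact hi
  rw [himg, Finset.card_image_of_injective _ π.symm.injective, Fin.card_Iic]

lemma Lset_eq_iff (π : RankOrd α) (x : α) (B : Finset α) :
    Lset π x = B ↔
      ((Finset.univ.filter fun w => (π w : ℕ) < B.card) = B ∧ (π x : ℕ) + 1 = B.card) := by
  constructor
  · intro h
    have hc : (π x : ℕ) + 1 = B.card := by rw [← h, card_Lset]
    have hLf : Lset π x = Finset.univ.filter fun w => (π w : ℕ) < B.card := by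
      ext w
      simp only [Lset, Finset.mem_filter, Finset.mem_univ, true_and, ← hc, Nat.lt_succ_iff]
    exact ⟨by rw [← hLf]; exact h, hc⟩
  · rintro ⟨h1, h2⟩
    have hLf : Lset π x = Finset.univ.filter fun w => (π w : ℕ) < B.card := by
      ext w
      simp only [Lset, Finset.mem_filter, Finset.mem_univ, true_and, ← h2, Nat.lt_succ_iff]
    rw [hLf, h1]

lemma sum_a (π : RankOrd α) (c : ℝ) (A : Finset α) (hA : A.Nonempty) :
    ∑ x ∈ A, (if Lset π x = A then c else 0)
      = if (Finset.univ.filter fun w => (π w : ℕ) < A.card) = A then c else 0 := by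
  simp_rw [Lset_eq_iff]
  by_cases hE : (Finset.univ.filter fun w => (π w : ℕ) < A.card) = A
  · simp only [hE, true_and, if_true]
    have hk1 : 1 ≤ A.card := Finset.card_pos.2 hA
    have hkn : A.card - 1 < Fintype.card α :=
      lt_of_lt_of_le (Nat.sub_lt hk1 one_pos) (Finset.card_le_univ A)
    set x0 : α := π.symm ⟨A.card - 1, hkn⟩ with hx0
    have hcond : ∀ x, ((π x : ℕ) + 1 = A.card) ↔ x = x0 := by
      intro x
      rw [hx0, Equiv.eq_symm_apply]
      constructor
      · intro h; exact Fin.ext (show (π x : ℕ) = A.card - 1 by omega)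
      · intro h
        rw [h]
        show A.card - 1 + 1 = A.card
        omega
    simp_rw [hcond]
    rw [Finset.sum_ite_eq' A x0 (fun _ => c), if_pos]
    rw [← hE]
    simp only [Finset.mem_filter, Finset.mem_univ, true_and, hx0, Equiv.apply_symm_apply]
    exact Nat.sub_lt hk1 one_pos
  · simp [hE]

lemma sum_b (π : RankOrd α) (c : ℝ) (A : Finset α) (hA' : A ≠ Finset.univ) :
    ∑ y ∈ Finset.univ \ A, (if Lset π y = insert y A then c else 0)
      = if (Finset.univ.filter fun w => (π w : ℕ) < A.card) = A then c else 0 := by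
  have hkn : A.card < Fintype.card α := by
    rw [← Finset.card_univ]
    exact Finset.card_lt_card (Finset.ssubset_univ_iff.2 hA')
  have hterm : ∀ y ∈ Finset.univ \ A,
      (if Lset π y = insert y A then c else 0)
      = (if ((Finset.univ.filter fun w => (π w : ℕ) < A.card) = A ∧ (π y : ℕ) = A.card)
          then c else 0) := by
    intro y hy
    have hyA : y ∉ A := (Finset.mem_sdiff.1 hy).2
    have hcard : (insert y A).card = A.card + 1 := Finset.card_insert_of_notMem hyA
    refine if_congr ?_ rfl rfl
    rw [Lset_eq_iff, hcard]
    constructor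
    · rintro ⟨h1, h2⟩
      have hπy : (π y : ℕ) = A.card := by omega
      refine ⟨?_, hπy⟩
      have hstep : (Finset.univ.filter fun w => (π w : ℕ) < A.card + 1)
          = insert y (Finset.univ.filter fun w => (π w : ℕ) < A.card) := by
        ext w
        simp only [Finset.mem_filter, Finset.mem_univ, true_and, Finset.mem_insert,
          Nat.lt_succ_iff, le_iff_lt_or_eq]
        constructor
        · rintro (h | h)
          · exact Or.inr h
          · left; exact π.injective (Fin.val_injective (by rw [h, hπy]))
        · rintro (rfl | h)
          · right; exact hπy
          · exact Or.inl h
      rw [hstep] at h1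
      have hnm : y ∉ (Finset.univ.filter fun w => (π w : ℕ) < A.card) := by
        simp [hπy]
      calc (Finset.univ.filter fun w => (π w : ℕ) < A.card)
          = (insert y (Finset.univ.filter fun w => (π w : ℕ) < A.card)).erase y := by
            rw [Finset.erase_insert hnm]
        _ = (insert y A).erase y := by rw [h1]
        _ = A := by rw [Finset.erase_insert hyA]
    · rintro ⟨h1, h2⟩
      refine ⟨?_, by omega⟩
      ext w
      simp only [Finset.mem_filter, Finset.mem_univ, true_and, Finset.mem_insert,
        Nat.lt_succ_iff, le_iff_lt_or_eq]
      constructor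
      · rintro (h | h)
        · right; rw [← h1]; simp [h]
        · left; exact π.injective (Fin.val_injective (by rw [h, h2]))
      · rintro (rfl | h)
        · right; exact h2
        · left; rw [← h1] at h; exact (Finset.mem_filter.1 h).2
  rw [Finset.sum_congr rfl hterm]
  by_cases hE : (Finset.univ.filter fun w => (π w : ℕ) < A.card) = A
  · simp only [hE, true_and, if_true]
    set y0 : α := π.symm ⟨A.card, hkn⟩ with hy0
    have hcond : ∀ y, ((π y : ℕ) = A.card) ↔ y = y0 := by
      intro y
      rw [hy0, Equiv.eq_symm_apply]
      constructor
      · intro h; exact Fin.ext (by simpa using h)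
      · intro h; rw [h]
    simp_rw [hcond]
    rw [Finset.sum_ite_eq' _ y0 (fun _ => c), if_pos]
    have hy0A : y0 ∉ A := by
      intro h
      rw [← hE] at h
      simp [hy0] at h
    simp [hy0A]
  · simp [hE]

end Aux

/-- Inflow equals outflow: for every `∅ ⊊ A ⊊ X`,
`∑_{y ∈ X\A} q(y, A ∪ {y}) = ∑_{x ∈ A} q(x, A)` on the probability flow diagram. -/
theorem inflow_eq_outflow {α : Type*} [Fintype α] [DecidableEq α]
    (ν : RankOrd α → ℝ) (hν : IsDist ν)
    (A : Finset α) (hA : A.Nonempty) (hA' : A ≠ Finset.univ) :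
    ∑ y ∈ Finset.univ \ A, bm (choiceProb ν) y (insert y A) =
      ∑ x ∈ A, bm (choiceProb ν) x A := by
  have hL : ∀ y ∈ Finset.univ \ A, bm (choiceProb ν) y (insert y A)
      = ∑ π : RankOrd α, if Lset π y = insert y A then ν π else 0 :=
    fun y _ => bm_eq ν y (insert y A)
  have hR : ∀ x ∈ A, bm (choiceProb ν) x A
      = ∑ π : RankOrd α, if Lset π x = A then ν π else 0 :=
    fun x _ => bm_eq ν x A
  rw [Finset.sum_congr rfl hL, Finset.sum_congr rfl hR, Finset.sum_comm, Finset.sum_comm (s := A)]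
  refine Finset.sum_congr rfl fun π _ => ?_
  rw [sum_a π (ν π) A hA, sum_b π (ν π) A hA']
end

section
/- (Necessity direction of Theorem 1) Let (X,P) be a system of choice probabilities rationalized by some distribution over linear orders ν, and suppose the probability flow diagram has a pair of supported branching paths. Then there exist two distinct distributions ν₁ ≠ ν₂ over linear orders, both rationalizing (X,P). -/
open Finset
open scoped Classical

variable {α : Type*} [Fintype α] [DecidableEq α]

set_option linter.unusedSectionVars false
section Aux

lemma card_filter_rank_lt (π : RankOrd α) (c : ℕ) (hc : c ≤ Fintype.card α) :
    (univ.filter fun w => (π w : ℕ) < c).card = c := by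
  have h1 : (univ.filter fun w => (π w : ℕ) < c)
      = (univ.filter fun v : Fin (Fintype.card α) => (v : ℕ) < c).image π.symm := by
    ext w
    simp only [mem_image, mem_filter, mem_univ, true_and]
    constructor
    · intro hw; exact ⟨π w, hw, π.symm_apply_apply w⟩
    · rintro ⟨v, hv, rfl⟩; simpa using hv
  have h2 : (univ.filter fun v : Fin (Fintype.card α) => (v : ℕ) < c)
      = (Finset.range c).attachFin (fun m hm => lt_of_lt_of_le (Finset.mem_range.1 hm) hc) := by
    ext v; simp [Finset.mem_attachFin]
  rw [h1, Finset.card_image_of_injective _ π.symm.injective, h2, Finset.card_attachFin,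
    Finset.card_range]

lemma mem_pathOf {π : RankOrd α} {i : ℕ} {x : α} :
    x ∈ pathOf π i ↔ (π x : ℕ) < Fintype.card α - i := by simp [pathOf]

lemma card_pathOf (π : RankOrd α) {i : ℕ} (hi : i ≤ Fintype.card α) :
    (pathOf π i).card = Fintype.card α - i :=
  card_filter_rank_lt π _ (by omega)

lemma isPath_pathOf (π : RankOrd α) : IsPath (pathOf π) := by
  refine ⟨?_, ?_, ?_⟩
  · ext x; simp [pathOf, (π x).isLt]
  · ext x; simp [pathOf]
  · intro i hi
    have hsub : pathOf π (i + 1) ⊆ pathOf π i := by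
      intro x hx; rw [mem_pathOf] at *; omega
    refine ⟨hsub, ?_⟩
    rw [card_sdiff_of_subset hsub, card_pathOf π (by omega), card_pathOf π (by omega)]
    omega

lemma IsPath.subset_of_le {ρ : ℕ → Finset α} (h : IsPath ρ) {i j : ℕ}
    (hij : i ≤ j) (hj : j ≤ Fintype.card α) : ρ j ⊆ ρ i := by
  obtain ⟨d, rfl⟩ := Nat.exists_eq_add_of_le hij
  clear hij
  induction d with
  | zero => exact Finset.Subset.refl _
  | succ d IH =>
      have h1 : i + d < Fintype.card α := by omega
      exact Finset.Subset.trans (h.2.2 (i + d) h1).1 (IH (by omega))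

lemma IsPath.card_eq {ρ : ℕ → Finset α} (h : IsPath ρ) :
    ∀ i ≤ Fintype.card α, (ρ i).card = Fintype.card α - i := by
  intro i
  induction i with
  | zero => intro _; simp [h.1]
  | succ i IH =>
      intro hi
      have h1 := (h.2.2 i (by omega)).1
      have h2 := (h.2.2 i (by omega)).2
      rw [card_sdiff_of_subset h1] at h2
      have := IH (by omega)
      omega
lemma IsPath.sdiff_nonempty {ρ : ℕ → Finset α} (h : IsPath ρ) {i : ℕ}
    (hi : i < Fintype.card α) : (ρ i \ ρ (i + 1)).Nonempty :=
  Finset.card_pos.1 (by rw [(h.2.2 i hi).2]; norm_num)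

noncomputable def pathElem (ρ : ℕ → Finset α) (h : IsPath ρ) (i : ℕ)
    (hi : i < Fintype.card α) : α :=
  (h.sdiff_nonempty hi).choose

lemma pathElem_mem (ρ : ℕ → Finset α) (h : IsPath ρ) (i : ℕ) (hi : i < Fintype.card α) :
    pathElem ρ h i hi ∈ ρ i \ ρ (i + 1) := (h.sdiff_nonempty hi).choose_spec

lemma pathElem_mem_iff (ρ : ℕ → Finset α) (h : IsPath ρ) (i : ℕ) (hi : i < Fintype.card α)
    {j : ℕ} (hj : j ≤ Fintype.card α) :
    pathElem ρ h i hi ∈ ρ j ↔ j ≤ i := by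
  have hm := pathElem_mem ρ h i hi
  rw [Finset.mem_sdiff] at hm
  constructor
  · intro hmem
    by_contra hc
    exact hm.2 (h.subset_of_le (by omega) hj hmem)
  · intro hij
    exact h.subset_of_le hij (by omega) hm.1

lemma pathElem_inj (ρ : ℕ → Finset α) (h : IsPath ρ) {i i' : ℕ}
    (hi : i < Fintype.card α) (hi' : i' < Fintype.card α)
    (heq : pathElem ρ h i hi = pathElem ρ h i' hi') : i = i' := by
  have a1 : pathElem ρ h i hi ∈ ρ i' := by
    rw [heq]; rw [pathElem_mem_iff ρ h i' hi' (by omega)]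
  have a2 : pathElem ρ h i' hi' ∈ ρ i := by
    rw [← heq]; rw [pathElem_mem_iff ρ h i hi (by omega)]
  rw [pathElem_mem_iff ρ h i hi (by omega)] at a1
  rw [pathElem_mem_iff ρ h i' hi' (by omega)] at a2
  omega

noncomputable def pathOrd (ρ : ℕ → Finset α) (h : IsPath ρ) : RankOrd α :=
  (Equiv.ofBijective (fun k : Fin (Fintype.card α) =>
      pathElem ρ h (Fintype.card α - 1 - (k : ℕ)) (by have := k.2; omega))
    (by
      rw [Fintype.bijective_iff_injective_and_card]
      refine ⟨?_, by simp⟩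
      intro k k' hkk'
      dsimp only at hkk'
      have := pathElem_inj ρ h _ _ hkk'
      have hk := k.2; have hk' := k'.2
      exact Fin.ext (by omega))).symm

lemma pathOrd_symm_apply (ρ : ℕ → Finset α) (h : IsPath ρ) (k : Fin (Fintype.card α)) :
    (pathOrd ρ h).symm k
      = pathElem ρ h (Fintype.card α - 1 - (k : ℕ)) (by have := k.2; omega) := rfl

lemma pathOf_pathOrd (ρ : ℕ → Finset α) (h : IsPath ρ) {m : ℕ} (hm : m ≤ Fintype.card α) :
    pathOf (pathOrd ρ h) m = ρ m := by
  ext x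
  have hx : pathElem ρ h (Fintype.card α - 1 - ((pathOrd ρ h x : ℕ)))
      (by have := (pathOrd ρ h x).2; omega) = x := by
    rw [← pathOrd_symm_apply ρ h (pathOrd ρ h x)]
    exact (pathOrd ρ h).symm_apply_apply x
  have hk := (pathOrd ρ h x).2
  rw [mem_pathOf]
  constructor
  · intro hlt
    rw [← hx, pathElem_mem_iff ρ h _ _ hm]
    omega
  · intro hmem
    rw [← hx, pathElem_mem_iff ρ h _ _ hm] at hmem
    omega

lemma ord_eq_of_pathOf_eq {π π' : RankOrd α}
    (h : ∀ m ≤ Fintype.card α, pathOf π m = pathOf π' m) : π = π' := by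
  apply Equiv.ext
  intro x
  have hk := (π x).2
  have h1 : x ∈ pathOf π (Fintype.card α - 1 - (π x : ℕ)) := by rw [mem_pathOf]; omega
  have h2 : x ∉ pathOf π (Fintype.card α - (π x : ℕ)) := by rw [mem_pathOf]; omega
  rw [h _ (by omega)] at h1
  rw [h _ (by omega)] at h2
  rw [mem_pathOf] at h1 h2
  exact Fin.ext (by omega)

/-- `inM` says that `B` is exactly the weak lower contour set of `x`. -/
lemma inM_iff_setLe (π : RankOrd α) (x : α) (B : Finset α) :
    inM π x B ↔ B = univ.filter fun w => (π w : ℕ) ≤ (π x : ℕ) := by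
  constructor
  · rintro ⟨h1, h2⟩
    ext z
    simp only [mem_filter, mem_univ, true_and]
    constructor
    · intro hz
      rcases eq_or_ne z x with rfl | hne
      · exact le_rfl
      · exact le_of_lt (h2 z hz hne)
    · intro hz
      by_contra hc
      exact absurd (h1 z hc) (by omega)
  · rintro rfl
    constructor
    · intro z hz
      simp only [mem_filter, mem_univ, true_and, not_le] at hz
      exact hz
    · intro y hy hne
      simp only [mem_filter, mem_univ, true_and] at hy
      have : (π y : ℕ) ≠ (π x : ℕ) := fun hc => hne (π.injective (Fin.ext hc))
      omega

lemma not_inM_empty (π : RankOrd α) (x : α) : ¬ inM π x (∅ : Finset α) := by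
  rintro ⟨h1, _⟩
  exact absurd (h1 x (Finset.notMem_empty x)) (by omega)

lemma inM_card (π : RankOrd α) (x : α) (B : Finset α) (h : inM π x B) :
    B.card = (π x : ℕ) + 1 := by
  rw [inM_iff_setLe] at h
  subst h
  have : (univ.filter fun w => (π w : ℕ) ≤ (π x : ℕ))
      = univ.filter fun w => (π w : ℕ) < (π x : ℕ) + 1 := by
    ext w; simp [Nat.lt_succ_iff]
  rw [this, card_filter_rank_lt π _ (by have := (π x).2; omega)]

/-- Characterization of `inM` via the path of `π`. -/
lemma inM_iff_pathOf (π : RankOrd α) (x : α) (B : Finset α) (hB : B.Nonempty) :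
    inM π x B ↔ pathOf π (Fintype.card α - B.card) = B ∧
      pathOf π (Fintype.card α - B.card + 1) = B \ {x} := by
  have hBn : B.card ≤ Fintype.card α := by
    simpa using Finset.card_le_card (Finset.subset_univ B)
  have hB1 : 1 ≤ B.card := Finset.card_pos.2 hB
  constructor
  · intro h
    have hc := inM_card π x B h
    have hπx := (π x).2
    rw [inM_iff_setLe] at h
    constructor
    · ext w
      rw [mem_pathOf, hc, h]
      simp only [mem_filter, mem_univ, true_and]
      omega
    · ext w
      rw [mem_pathOf, hc, h]
      simp only [Finset.mem_sdiff, mem_filter, mem_univ, true_and, Finset.mem_singleton]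
      constructor
      · intro hw
        have hne : (π w : ℕ) ≠ (π x : ℕ) := by omega
        exact ⟨by omega, fun hc => hne (by rw [hc])⟩
      · rintro ⟨hw, hne⟩
        have : (π w : ℕ) ≠ (π x : ℕ) := fun hc => hne (π.injective (Fin.ext hc))
        omega
  · rintro ⟨h1, h2⟩
    have hxB : x ∈ B := by
      by_contra hc
      have : B \ {x} = B := Finset.sdiff_eq_self_of_disjoint (by simpa using hc)
      rw [this] at h2
      have c2 : B.card = Fintype.card α - (Fintype.card α - B.card + 1) := by
        conv_lhs => rw [← h2]
        rw [card_pathOf π (by omega)]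
      omega
    have hx1 : x ∈ pathOf π (Fintype.card α - B.card) := by rw [h1]; exact hxB
    have hx2 : x ∉ pathOf π (Fintype.card α - B.card + 1) := by
      rw [h2]; simp
    rw [mem_pathOf] at hx1 hx2
    have hπx : (π x : ℕ) = B.card - 1 := by omega
    rw [inM_iff_setLe]
    rw [← h1]
    ext w
    rw [mem_pathOf]
    simp only [mem_filter, mem_univ, true_and]
    omega

noncomputable def flowOf (ν : RankOrd α → ℝ) (B : Finset α) (x : α) : ℝ :=
  ∑ π : RankOrd α, if inM π x B then ν π else 0

lemma choiceProb_eq_sum_flowOf (ν : RankOrd α → ℝ) (A : Finset α) (x : α) :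
    choiceProb ν A x = ∑ B ∈ univ.powerset.filter (fun B => A ⊆ B), flowOf ν B x := by
  unfold choiceProb flowOf
  rw [Finset.sum_comm]
  refine Finset.sum_congr rfl fun π _ => ?_
  rw [← Finset.sum_filter, Finset.filter_filter]
  by_cases hmax : ∀ y ∈ A, y ≠ x → (π y : ℕ) < (π x : ℕ)
  · rw [if_pos hmax]
    have : (univ.powerset.filter fun B => A ⊆ B ∧ inM π x B)
        = {univ.filter fun w => (π w : ℕ) ≤ (π x : ℕ)} := by
      ext B
      simp only [Finset.mem_filter, Finset.mem_powerset, Finset.mem_singleton]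
      constructor
      · rintro ⟨_, _, hM⟩
        exact (inM_iff_setLe π x B).1 hM
      · rintro rfl
        refine ⟨Finset.filter_subset _ _, ?_, (inM_iff_setLe π x _).2 rfl⟩
        intro y hy
        simp only [mem_filter, mem_univ, true_and]
        rcases eq_or_ne y x with rfl | hne
        · exact le_rfl
        · exact le_of_lt (hmax y hy hne)
    rw [this, Finset.sum_singleton]
  · rw [if_neg hmax]
    have : (univ.powerset.filter fun B => A ⊆ B ∧ inM π x B) = ∅ := by
      ext B
      simp only [Finset.mem_filter, Finset.mem_powerset, Finset.notMem_empty, iff_false,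
        not_and]
      rintro _ hAB hM
      exact hmax fun y hy hne => hM.2 y (hAB hy) hne
    rw [this, Finset.sum_empty]

lemma rationalizes_of_flowOf_eq {P : Finset α → α → ℝ} {ν ν' : RankOrd α → ℝ}
    (hν : Rationalizes ν P) (hd : IsDist ν')
    (hf : ∀ B y, flowOf ν' B y = flowOf ν B y) : Rationalizes ν' P := by
  refine ⟨hd, fun A hA x hx => ?_⟩
  rw [hν.2 A hA x hx, choiceProb_eq_sum_flowOf, choiceProb_eq_sum_flowOf]
  exact Finset.sum_congr rfl fun B _ => (hf B x).symm

-- Möbius inversion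
lemma sum_neg_one_pow_between (A B : Finset α) (hAB : A ⊆ B) :
    ∑ A' ∈ univ.powerset.filter (fun A' => A ⊆ A' ∧ A' ⊆ B), (-1 : ℝ) ^ (A' \ A).card
      = if B = A then 1 else 0 := by
  have hre : ∑ A' ∈ univ.powerset.filter (fun A' => A ⊆ A' ∧ A' ⊆ B),
      (-1 : ℝ) ^ (A' \ A).card = ∑ C ∈ (B \ A).powerset, (-1 : ℝ) ^ C.card := by
    refine Finset.sum_nbij' (fun A' => A' \ A) (fun C => A ∪ C) ?_ ?_ ?_ ?_ ?_
    · intro A' hA'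
      simp only [Finset.mem_filter, Finset.mem_powerset] at hA' ⊢
      exact Finset.sdiff_subset_sdiff hA'.2.2 (Finset.Subset.refl A)
    · intro C hC
      simp only [Finset.mem_powerset] at hC
      simp only [Finset.mem_filter, Finset.mem_powerset]
      refine ⟨Finset.subset_univ _, Finset.subset_union_left, ?_⟩
      exact Finset.union_subset hAB (hC.trans (Finset.sdiff_subset))
    · intro A' hA'
      simp only [Finset.mem_filter, Finset.mem_powerset] at hA'
      exact Finset.union_sdiff_of_subset hA'.2.1
    · intro C hC
      simp only [Finset.mem_powerset] at hC
      exact Finset.union_sdiff_cancel_left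
        (Finset.disjoint_of_subset_right hC Finset.disjoint_sdiff)
    · intro A' hA'; rfl
  rw [hre]
  have : ∑ C ∈ (B \ A).powerset, (-1 : ℝ) ^ C.card
      = ((∑ C ∈ (B \ A).powerset, (-1 : ℤ) ^ C.card : ℤ) : ℝ) := by push_cast; rfl
  rw [this, Finset.sum_powerset_neg_one_pow_card]
  have hiff : B \ A = ∅ ↔ B = A := by
    rw [Finset.sdiff_eq_empty_iff_subset]
    exact ⟨fun h => Finset.Subset.antisymm h hAB, fun h => h ▸ Finset.Subset.refl _⟩
  by_cases hd : B = A
  · rw [if_pos (hiff.2 hd), if_pos hd]; norm_num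
  · rw [if_neg (fun h => hd (hiff.1 h)), if_neg hd]; norm_num

lemma bm_eq_flowOf {P : Finset α → α → ℝ} {ν : RankOrd α → ℝ} (hν : Rationalizes ν P)
    {A : Finset α} {x : α} (hx : x ∈ A) : bm P x A = flowOf ν A x := by
  unfold bm
  have hstep : ∀ A' ∈ univ.powerset.filter (fun A' => A ⊆ A'),
      (-1 : ℝ) ^ (A' \ A).card * P A' x
        = ∑ B ∈ univ.powerset, if A' ⊆ B then (-1 : ℝ) ^ (A' \ A).card * flowOf ν B x else 0 := by
    intro A' hA'
    simp only [Finset.mem_filter, Finset.mem_powerset] at hA'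
    rw [hν.2 A' ⟨x, hA'.2 hx⟩ x (hA'.2 hx), choiceProb_eq_sum_flowOf]
    rw [← Finset.sum_filter, Finset.mul_sum]
  rw [Finset.sum_congr rfl hstep]
  rw [Finset.sum_filter]
  have hpush : ∀ A' ∈ univ.powerset,
      (if A ⊆ A' then (∑ B ∈ univ.powerset, if A' ⊆ B then (-1 : ℝ) ^ (A' \ A).card * flowOf ν B x else 0) else 0)
        = ∑ B ∈ univ.powerset, if A ⊆ A' then (if A' ⊆ B then (-1 : ℝ) ^ (A' \ A).card * flowOf ν B x else 0) else 0 := by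
    intro A' _
    by_cases h : A ⊆ A' <;> simp [h]
  rw [Finset.sum_congr rfl hpush]
  rw [Finset.sum_comm]
  have hout : ∀ B ∈ univ.powerset,
      (∑ A' ∈ univ.powerset, if A ⊆ A' then (if A' ⊆ B then (-1 : ℝ) ^ (A' \ A).card * flowOf ν B x else 0) else 0)
        = (if B = A then 1 else 0) * flowOf ν B x := by
    intro B _
    have : ∀ A' ∈ univ.powerset,
        (if A ⊆ A' then (if A' ⊆ B then (-1 : ℝ) ^ (A' \ A).card * flowOf ν B x else 0) else 0)
          = (if A ⊆ A' ∧ A' ⊆ B then (-1 : ℝ) ^ (A' \ A).card else 0) * flowOf ν B x := by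
      intro A' _
      by_cases h1 : A ⊆ A' <;> by_cases h2 : A' ⊆ B <;> simp [h1, h2]
    rw [Finset.sum_congr rfl this, ← Finset.sum_mul, ← Finset.sum_filter (s := univ.powerset)]
    by_cases hAB : A ⊆ B
    · rw [sum_neg_one_pow_between A B hAB]
    · have he : univ.powerset.filter (fun A' => A ⊆ A' ∧ A' ⊆ B) = ∅ := by
        ext A'
        simp only [Finset.mem_filter, Finset.mem_powerset, Finset.notMem_empty, iff_false, not_and]
        intro _ h1 h2
        exact hAB (h1.trans h2)
      have hBA : B ≠ A := fun h => hAB (h ▸ Finset.Subset.refl _)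
      rw [he, Finset.sum_empty, if_neg hBA]
  rw [Finset.sum_congr rfl hout]
  have hlast : ∀ B ∈ univ.powerset,
      (if B = A then (1 : ℝ) else 0) * flowOf ν B x = if B = A then flowOf ν A x else 0 := by
    intro B _
    by_cases h : B = A <;> simp [h]
  rw [Finset.sum_congr rfl hlast, Finset.sum_ite_eq' univ.powerset A (fun _ => flowOf ν A x),
    if_pos (Finset.mem_powerset.2 (Finset.subset_univ A))]

-- Crossover machinery
def crossPath (π π' : RankOrd α) (t : ℕ) : ℕ → Finset α :=
  fun m => if m ≤ t then pathOf π m else pathOf π' m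

lemma isPath_crossPath (π π' : RankOrd α) (t : ℕ) (hsh : pathOf π t = pathOf π' t) :
    IsPath (crossPath π π' t) := by
  have hπ := isPath_pathOf π
  have hπ' := isPath_pathOf π'
  refine ⟨?_, ?_, ?_⟩
  · unfold crossPath
    rw [if_pos (Nat.zero_le t)]
    exact hπ.1
  · unfold crossPath
    split_ifs
    · exact hπ.2.1
    · exact hπ'.2.1
  · intro m hm
    unfold crossPath
    by_cases h1 : m + 1 ≤ t
    · rw [if_pos h1, if_pos (show m ≤ t by omega)]
      exact hπ.2.2 m hm
    · by_cases h2 : m ≤ t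
      · have hme : m = t := by omega
        subst hme
        rw [if_pos h2, if_neg h1, hsh]
        exact hπ'.2.2 m hm
      · rw [if_neg h2, if_neg h1]
        exact hπ'.2.2 m hm

noncomputable def crossOrd (π π' : RankOrd α) (t : ℕ) (hsh : pathOf π t = pathOf π' t) :
    RankOrd α :=
  pathOrd (crossPath π π' t) (isPath_crossPath π π' t hsh)

lemma pathOf_crossOrd (π π' : RankOrd α) (t : ℕ) (hsh : pathOf π t = pathOf π' t)
    {m : ℕ} (hm : m ≤ Fintype.card α) :
    pathOf (crossOrd π π' t hsh) m = crossPath π π' t m :=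
  pathOf_pathOrd _ _ hm

lemma inM_congr_of_pathOf_eq {τ τ' : RankOrd α} {B : Finset α} (y : α) (hB : B.Nonempty)
    (e1 : pathOf τ (Fintype.card α - B.card) = pathOf τ' (Fintype.card α - B.card))
    (e2 : pathOf τ (Fintype.card α - B.card + 1) = pathOf τ' (Fintype.card α - B.card + 1)) :
    inM τ y B ↔ inM τ' y B := by
  rw [inM_iff_pathOf τ y B hB, inM_iff_pathOf τ' y B hB, e1, e2]

lemma cross_inM_identity (π π' : RankOrd α) (t : ℕ) (hsh : pathOf π t = pathOf π' t)
    (B : Finset α) (y : α) :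
    ((if inM (crossOrd π π' t hsh) y B then (1 : ℝ) else 0)
      + (if inM (crossOrd π' π t hsh.symm) y B then 1 else 0))
    = (if inM π y B then 1 else 0) + (if inM π' y B then 1 else 0) := by
  rcases Finset.eq_empty_or_nonempty B with rfl | hB
  · simp [not_inM_empty]
  have hBn : B.card ≤ Fintype.card α := by
    simpa using Finset.card_le_card (Finset.subset_univ B)
  have hB1 : 1 ≤ B.card := Finset.card_pos.2 hB
  have hm1 : Fintype.card α - B.card ≤ Fintype.card α := by omega
  have hm2 : Fintype.card α - B.card + 1 ≤ Fintype.card α := by omega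
  have c2m : pathOf (crossOrd π π' t hsh) (Fintype.card α - B.card)
      = crossPath π π' t (Fintype.card α - B.card) := pathOf_crossOrd _ _ _ _ hm1
  have c2m1 : pathOf (crossOrd π π' t hsh) (Fintype.card α - B.card + 1)
      = crossPath π π' t (Fintype.card α - B.card + 1) := pathOf_crossOrd _ _ _ _ hm2
  have c3m : pathOf (crossOrd π' π t hsh.symm) (Fintype.card α - B.card)
      = crossPath π' π t (Fintype.card α - B.card) := pathOf_crossOrd _ _ _ _ hm1
  have c3m1 : pathOf (crossOrd π' π t hsh.symm) (Fintype.card α - B.card + 1)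
      = crossPath π' π t (Fintype.card α - B.card + 1) := pathOf_crossOrd _ _ _ _ hm2
  by_cases h1 : Fintype.card α - B.card + 1 ≤ t
  · have e2 : inM (crossOrd π π' t hsh) y B ↔ inM π y B := by
      refine inM_congr_of_pathOf_eq y hB ?_ ?_
      · rw [c2m]; simp only [crossPath]; rw [if_pos (show Fintype.card α - B.card ≤ t by omega)]
      · rw [c2m1]; simp only [crossPath]; rw [if_pos h1]
    have e3 : inM (crossOrd π' π t hsh.symm) y B ↔ inM π' y B := by
      refine inM_congr_of_pathOf_eq y hB ?_ ?_
      · rw [c3m]; simp only [crossPath]; rw [if_pos (show Fintype.card α - B.card ≤ t by omega)]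
      · rw [c3m1]; simp only [crossPath]; rw [if_pos h1]
    rw [if_congr e2 rfl rfl, if_congr e3 rfl rfl]
  · by_cases h2 : Fintype.card α - B.card ≤ t
    · have hme : Fintype.card α - B.card = t := by omega
      have e2 : inM (crossOrd π π' t hsh) y B ↔ inM π' y B := by
        refine inM_congr_of_pathOf_eq y hB ?_ ?_
        · rw [c2m]; simp only [crossPath]; rw [if_pos h2, hme]; exact hsh
        · rw [c2m1]; simp only [crossPath]; rw [if_neg h1]
      have e3 : inM (crossOrd π' π t hsh.symm) y B ↔ inM π y B := by
        refine inM_congr_of_pathOf_eq y hB ?_ ?_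
        · rw [c3m]; simp only [crossPath]; rw [if_pos h2, hme]; exact hsh.symm
        · rw [c3m1]; simp only [crossPath]; rw [if_neg h1]
      rw [if_congr e2 rfl rfl, if_congr e3 rfl rfl]
      ring
    · have e2 : inM (crossOrd π π' t hsh) y B ↔ inM π' y B := by
        refine inM_congr_of_pathOf_eq y hB ?_ ?_
        · rw [c2m]; simp only [crossPath]; rw [if_neg h2]
        · rw [c2m1]; simp only [crossPath]; rw [if_neg h1]
      have e3 : inM (crossOrd π' π t hsh.symm) y B ↔ inM π y B := by
        refine inM_congr_of_pathOf_eq y hB ?_ ?_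
        · rw [c3m]; simp only [crossPath]; rw [if_neg h2]
        · rw [c3m1]; simp only [crossPath]; rw [if_neg h1]
      rw [if_congr e2 rfl rfl, if_congr e3 rfl rfl]
      ring

-- Perturbations
noncomputable def combo (a b c d : RankOrd α) : RankOrd α → ℝ :=
  fun τ => (if τ = a then (1 : ℝ) else 0) + (if τ = b then 1 else 0)
    - (if τ = c then 1 else 0) - (if τ = d then 1 else 0)

lemma sum_inM_indicator (a : RankOrd α) (B : Finset α) (y : α) :
    (∑ τ : RankOrd α, if inM τ y B then (if τ = a then (1 : ℝ) else 0) else 0)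
      = if inM a y B then 1 else 0 := by
  have h : ∀ τ ∈ (univ : Finset (RankOrd α)),
      (if inM τ y B then (if τ = a then (1 : ℝ) else 0) else 0)
        = if τ = a then (if inM a y B then (1 : ℝ) else 0) else 0 := by
    intro τ _
    by_cases h : τ = a
    · subst h; simp
    · simp [h]
  rw [Finset.sum_congr rfl h, Finset.sum_ite_eq' univ a (fun _ => if inM a y B then (1:ℝ) else 0),
    if_pos (Finset.mem_univ a)]

lemma sum_eq_indicator (a : RankOrd α) :
    (∑ τ : RankOrd α, if τ = a then (1 : ℝ) else 0) = 1 := by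
  rw [Finset.sum_ite_eq' univ a (fun _ => (1:ℝ)), if_pos (Finset.mem_univ a)]

lemma flowOf_perturb (ν₁ : RankOrd α → ℝ) (ε : ℝ) (a b c d : RankOrd α)
    (hiden : ∀ B y, ((if inM a y B then (1 : ℝ) else 0) + (if inM b y B then 1 else 0))
      = (if inM c y B then 1 else 0) + (if inM d y B then 1 else 0))
    (B : Finset α) (y : α) :
    flowOf (fun τ => ν₁ τ + ε * combo a b c d τ) B y = flowOf ν₁ B y := by
  unfold flowOf combo
  have h : ∀ τ ∈ (univ : Finset (RankOrd α)),
      (if inM τ y B then ν₁ τ + ε * ((if τ = a then (1 : ℝ) else 0) + (if τ = b then 1 else 0)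
          - (if τ = c then 1 else 0) - (if τ = d then 1 else 0)) else 0)
        = (if inM τ y B then ν₁ τ else 0)
          + ε * ((if inM τ y B then (if τ = a then (1 : ℝ) else 0) else 0)
            + (if inM τ y B then (if τ = b then (1 : ℝ) else 0) else 0)
            - (if inM τ y B then (if τ = c then (1 : ℝ) else 0) else 0)
            - (if inM τ y B then (if τ = d then (1 : ℝ) else 0) else 0)) := by
    intro τ _
    by_cases h : inM τ y B <;> simp [h]
  rw [Finset.sum_congr rfl h]
  rw [Finset.sum_add_distrib, ← Finset.mul_sum]
  have hsplit : (∑ τ : RankOrd α,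
      ((if inM τ y B then (if τ = a then (1 : ℝ) else 0) else 0)
        + (if inM τ y B then (if τ = b then (1 : ℝ) else 0) else 0)
        - (if inM τ y B then (if τ = c then (1 : ℝ) else 0) else 0)
        - (if inM τ y B then (if τ = d then (1 : ℝ) else 0) else 0))) = 0 := by
    rw [Finset.sum_sub_distrib, Finset.sum_sub_distrib, Finset.sum_add_distrib]
    rw [sum_inM_indicator, sum_inM_indicator, sum_inM_indicator, sum_inM_indicator]
    rw [hiden B y]
    ring
  rw [hsplit]
  ring

lemma sum_perturb (ν₁ : RankOrd α → ℝ) (ε : ℝ) (a b c d : RankOrd α) :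
    (∑ τ : RankOrd α, (ν₁ τ + ε * combo a b c d τ)) = ∑ τ : RankOrd α, ν₁ τ := by
  unfold combo
  rw [Finset.sum_add_distrib, ← Finset.mul_sum]
  rw [Finset.sum_sub_distrib, Finset.sum_sub_distrib, Finset.sum_add_distrib]
  rw [sum_eq_indicator, sum_eq_indicator, sum_eq_indicator, sum_eq_indicator]
  ring

lemma exists_pos_of_isDist {ν₁ : RankOrd α → ℝ} (hd : IsDist ν₁) : ∃ π, 0 < ν₁ π := by
  by_contra hc
  push_neg at hc
  have : ∀ π : RankOrd α, ν₁ π = 0 := fun π => le_antisymm (hc π) (hd.1 π)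
  have hs : ∑ π : RankOrd α, ν₁ π = 0 := Finset.sum_eq_zero fun π _ => this π
  rw [hd.2] at hs
  norm_num at hs

lemma exists_inM_of_flowOf_pos {ν₁ : RankOrd α → ℝ} (hd : IsDist ν₁) {B : Finset α} {x : α}
    (hf : 0 < flowOf ν₁ B x) : ∃ τ, 0 < ν₁ τ ∧ inM τ x B := by
  by_contra hc
  push_neg at hc
  have : ∀ τ ∈ (univ : Finset (RankOrd α)), (if inM τ x B then ν₁ τ else 0) = 0 := by
    intro τ _
    by_cases h : inM τ x B
    · rw [if_pos h]
      exact le_antisymm (not_lt.1 fun hlt => (hc τ hlt) h) (hd.1 τ)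
    · rw [if_neg h]
  unfold flowOf at hf
  rw [Finset.sum_congr rfl this, Finset.sum_const_zero] at hf
  norm_num at hf

lemma key_lemma (ν : RankOrd α → ℝ) (σ : ℕ → Finset α) (hσ : IsPath σ)
    (hpos : ∀ m < Fintype.card α, ∀ x ∈ σ m \ σ (m + 1), 0 < flowOf ν (σ m) x) :
    ∀ t, t ≤ Fintype.card α → ∀ ν₁ : RankOrd α → ℝ, IsDist ν₁ →
      (∀ B y, flowOf ν₁ B y = flowOf ν B y) →
      ∃ ν₂ : RankOrd α → ℝ, IsDist ν₂ ∧ (∀ B y, flowOf ν₂ B y = flowOf ν B y) ∧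
        (∀ τ, 0 < ν₁ τ → 0 < ν₂ τ) ∧ ∃ π, 0 < ν₂ π ∧ ∀ m ≤ t, pathOf π m = σ m := by
  intro t
  induction t with
  | zero =>
      intro _ ν₁ hd1 hf1
      obtain ⟨π, hπ⟩ := exists_pos_of_isDist hd1
      refine ⟨ν₁, hd1, hf1, fun τ h => h, π, hπ, fun m hm => ?_⟩
      rw [Nat.le_zero.1 hm, (isPath_pathOf π).1, hσ.1]
  | succ t IH =>
      intro ht ν₀ hd0 hf0
      obtain ⟨ν₁, hd1, hf1, hpres1, π, hπpos, hπagr⟩ := IH (by omega) ν₀ hd0 hf0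
      have htlt : t < Fintype.card α := by omega
      obtain ⟨x, hx⟩ := hσ.sdiff_nonempty htlt
      have hfx : 0 < flowOf ν₁ (σ t) x := by
        rw [hf1]; exact hpos t htlt x hx
      obtain ⟨π', hπ'pos, hπ'M⟩ := exists_inM_of_flowOf_pos hd1 hfx
      have hσcard : (σ t).card = Fintype.card α - t := hσ.card_eq t (by omega)
      have hσtne : (σ t).Nonempty := ⟨x, (Finset.mem_sdiff.1 hx).1⟩
      have hchar := (inM_iff_pathOf π' x (σ t) hσtne).1 hπ'M
      rw [hσcard, show Fintype.card α - (Fintype.card α - t) = t from by omega] at hchar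
      obtain ⟨hπ't, hπ't1⟩ := hchar
      have hsd : σ t \ {x} = σ (t + 1) := by
        have h1 : σ t \ σ (t + 1) = {x} := by
          have hcard := (hσ.2.2 t htlt).2
          rw [Finset.card_eq_one] at hcard
          obtain ⟨a, ha⟩ := hcard
          rw [ha] at hx ⊢
          rw [Finset.mem_singleton] at hx
          rw [hx]
        ext a
        simp only [Finset.mem_sdiff, Finset.mem_singleton]
        constructor
        · rintro ⟨ha, hax⟩
          by_contra hc
          have : a ∈ σ t \ σ (t + 1) := Finset.mem_sdiff.2 ⟨ha, hc⟩
          rw [h1, Finset.mem_singleton] at this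
          exact hax this
        · intro ha
          refine ⟨(hσ.2.2 t htlt).1 ha, fun hc => ?_⟩
          have : x ∈ σ t \ σ (t + 1) := by rw [h1]; exact Finset.mem_singleton_self x
          exact (Finset.mem_sdiff.1 this).2 (hc ▸ ha)
      rw [hsd] at hπ't1
      by_cases hA : pathOf π (t + 1) = σ (t + 1)
      · refine ⟨ν₁, hd1, hf1, hpres1, π, hπpos, fun m hm => ?_⟩
        rcases Nat.lt_or_ge m (t + 1) with h | h
        · exact hπagr m (by omega)
        · rw [show m = t + 1 from by omega]; exact hA
      by_cases hBc : ∀ m ≤ t, pathOf π' m = σ m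
      · refine ⟨ν₁, hd1, hf1, hpres1, π', hπ'pos, fun m hm => ?_⟩
        rcases Nat.lt_or_ge m (t + 1) with h | h
        · exact hBc m (by omega)
        · rw [show m = t + 1 from by omega]; exact hπ't1
      have hsh : pathOf π t = pathOf π' t := by rw [hπagr t le_rfl, hπ't]
      have hiden := cross_inM_identity π π' t hsh
      have hπ2t1 : pathOf (crossOrd π π' t hsh) (t + 1) = σ (t + 1) := by
        rw [pathOf_crossOrd _ _ _ _ (show t + 1 ≤ Fintype.card α from by omega)]
        simp only [crossPath]
        rw [if_neg (by omega)]
        exact hπ't1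
      have hπ2agr : ∀ m ≤ t + 1, pathOf (crossOrd π π' t hsh) m = σ m := by
        intro m hm
        rcases Nat.lt_or_ge m (t + 1) with h | h
        · rw [pathOf_crossOrd _ _ _ _ (by omega)]
          simp only [crossPath]
          rw [if_pos (by omega)]
          exact hπagr m (by omega)
        · rw [show m = t + 1 from by omega]; exact hπ2t1
      have hπ3agr : ∀ m ≤ t, pathOf (crossOrd π' π t hsh.symm) m = pathOf π' m := by
        intro m hm
        rw [pathOf_crossOrd _ _ _ _ (by omega)]
        simp only [crossPath]
        rw [if_pos (by omega)]
      have d2π : crossOrd π π' t hsh ≠ π := by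
        intro he
        exact hA (by rw [← he]; exact hπ2t1)
      have d2π' : crossOrd π π' t hsh ≠ π' := by
        intro he
        refine hBc fun m hm => ?_
        rw [← he, pathOf_crossOrd _ _ _ _ (by omega)]
        simp only [crossPath]
        rw [if_pos (by omega)]
        exact hπagr m hm
      have d3π : crossOrd π' π t hsh.symm ≠ π := by
        intro he
        refine hBc fun m hm => ?_
        rw [← hπ3agr m hm, he]
        exact hπagr m hm
      have d3π' : crossOrd π' π t hsh.symm ≠ π' := by
        intro he
        refine hA ?_
        have : pathOf (crossOrd π' π t hsh.symm) (t + 1) = pathOf π (t + 1) := by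
          rw [pathOf_crossOrd _ _ _ _ (show t + 1 ≤ Fintype.card α from by omega)]
          simp only [crossPath]
          rw [if_neg (by omega)]
        rw [← this, he]
        exact hπ't1
      have dππ' : π ≠ π' := by
        intro he
        exact hA (by rw [he]; exact hπ't1)
      have hmin : 0 < min (ν₁ π) (ν₁ π') := lt_min hπpos hπ'pos
      set ε := min (ν₁ π) (ν₁ π') / 2 with hεdef
      have hε : 0 < ε := by positivity
      have hεπ : ε < ν₁ π := by
        have := min_le_left (ν₁ π) (ν₁ π')
        rw [hεdef]; linarith
      have hεπ' : ε < ν₁ π' := by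
        have := min_le_right (ν₁ π) (ν₁ π')
        rw [hεdef]; linarith
      refine ⟨fun τ => ν₁ τ + ε * combo (crossOrd π π' t hsh) (crossOrd π' π t hsh.symm) π π' τ,
        ⟨?_, ?_⟩, ?_, ?_, crossOrd π π' t hsh, ?_, hπ2agr⟩
      · intro τ
        dsimp only
        by_cases heq : τ = π
        · have hco : combo (crossOrd π π' t hsh) (crossOrd π' π t hsh.symm) π π' τ = -1 := by
            rw [heq]; unfold combo
            rw [if_neg (Ne.symm d2π), if_neg (Ne.symm d3π), if_pos rfl, if_neg dππ']; ring
          rw [hco, heq]; linarith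
        by_cases heq' : τ = π'
        · have hco : combo (crossOrd π π' t hsh) (crossOrd π' π t hsh.symm) π π' τ = -1 := by
            rw [heq']; unfold combo
            rw [if_neg (Ne.symm d2π'), if_neg (Ne.symm d3π'), if_neg (Ne.symm dππ'), if_pos rfl]
            ring
          rw [hco, heq']; linarith
        · have hco : 0 ≤ combo (crossOrd π π' t hsh) (crossOrd π' π t hsh.symm) π π' τ := by
            unfold combo
            rw [if_neg heq, if_neg heq']
            have i1 : (0:ℝ) ≤ if τ = crossOrd π π' t hsh then (1:ℝ) else 0 := by positivity
            have i2 : (0:ℝ) ≤ if τ = crossOrd π' π t hsh.symm then (1:ℝ) else 0 := by positivity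
            linarith
          have hb := hd1.1 τ
          nlinarith
      · rw [sum_perturb]
        exact hd1.2
      · intro B y
        rw [flowOf_perturb ν₁ ε _ _ π π' hiden B y, hf1]
      · intro τ hτ
        have hτ1 := hpres1 τ hτ
        dsimp only
        by_cases heq : τ = π
        · have hco : combo (crossOrd π π' t hsh) (crossOrd π' π t hsh.symm) π π' τ = -1 := by
            rw [heq]; unfold combo
            rw [if_neg (Ne.symm d2π), if_neg (Ne.symm d3π), if_pos rfl, if_neg dππ']; ring
          rw [hco, heq]; linarith
        by_cases heq' : τ = π'
        · have hco : combo (crossOrd π π' t hsh) (crossOrd π' π t hsh.symm) π π' τ = -1 := by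
            rw [heq']; unfold combo
            rw [if_neg (Ne.symm d2π'), if_neg (Ne.symm d3π'), if_neg (Ne.symm dππ'), if_pos rfl]
            ring
          rw [hco, heq']; linarith
        · have hco : 0 ≤ combo (crossOrd π π' t hsh) (crossOrd π' π t hsh.symm) π π' τ := by
            unfold combo
            rw [if_neg heq, if_neg heq']
            have i1 : (0:ℝ) ≤ if τ = crossOrd π π' t hsh then (1:ℝ) else 0 := by positivity
            have i2 : (0:ℝ) ≤ if τ = crossOrd π' π t hsh.symm then (1:ℝ) else 0 := by positivity
            linarith
          nlinarith
      · dsimp only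
        have i2 : (0:ℝ) ≤ if crossOrd π π' t hsh = crossOrd π' π t hsh.symm then (1:ℝ) else 0 := by
          positivity
        have hco : 1 ≤ combo (crossOrd π π' t hsh) (crossOrd π' π t hsh.symm) π π'
            (crossOrd π π' t hsh) := by
          unfold combo
          rw [if_pos rfl, if_neg d2π, if_neg d2π']
          linarith
        have hb := hd1.1 (crossOrd π π' t hsh)
        nlinarith

end Aux

/-- Necessity direction of Theorem 1: if a rationalizable system of choice probabilities
has a pair of supported branching paths, then it has two distinct rationalizations. -/
theorem not_unique_of_supported_branching {α : Type*} [Fintype α] [DecidableEq α]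
    (P : Finset α → α → ℝ) (ν : RankOrd α → ℝ) (hν : Rationalizes ν P)
    (hbr : ∃ ρ ρ' : ℕ → Finset α,
      SupportedPath P ρ ∧ SupportedPath P ρ' ∧ BranchingPair ρ ρ') :
    ∃ ν₁ ν₂ : RankOrd α → ℝ, ν₁ ≠ ν₂ ∧ Rationalizes ν₁ P ∧ Rationalizes ν₂ P := by
  obtain ⟨ρ, ρ', ⟨hρpath, hρpos⟩, ⟨hρ'path, hρ'pos⟩, i, j, hi1, hij, hjn, hne1, hne2, hagr⟩ := hbr
  have hn2 : 2 ≤ Fintype.card α := by omega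
  have hflowρ : ∀ m < Fintype.card α, ∀ x ∈ ρ m \ ρ (m + 1), 0 < flowOf ν (ρ m) x := by
    intro m hm x hx
    rw [← bm_eq_flowOf hν (Finset.mem_sdiff.1 hx).1]
    exact hρpos m hm x hx
  have hflowρ' : ∀ m < Fintype.card α, ∀ x ∈ ρ' m \ ρ' (m + 1), 0 < flowOf ν (ρ' m) x := by
    intro m hm x hx
    rw [← bm_eq_flowOf hν (Finset.mem_sdiff.1 hx).1]
    exact hρ'pos m hm x hx
  have hshρ : ρ i = ρ' i := hagr i le_rfl hij
  have general : ∀ a b : ℕ → Finset α, IsPath a → IsPath b → a i = b i →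
      (∀ m < Fintype.card α, ∀ x ∈ a m \ a (m + 1), 0 < flowOf ν (a m) x) →
      (∀ m < Fintype.card α, ∀ x ∈ b m \ b (m + 1), 0 < flowOf ν (b m) x) →
      IsPath (fun m => if m < i then a m else b m) ∧
        (∀ m < Fintype.card α, ∀ x ∈ (fun m => if m < i then a m else b m) m \
            (fun m => if m < i then a m else b m) (m + 1),
          0 < flowOf ν ((fun m => if m < i then a m else b m) m) x) := by
    intro a b ha hb hab hfa hfb
    have hval : ∀ m, (fun m => if m < i then a m else b m) m = if m < i then a m else b m :=
      fun m => rfl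
    have hstepeq : ∀ m, m < i → (fun m => if m < i then a m else b m) (m + 1) = a (m + 1) := by
      intro m hm
      by_cases h1 : m + 1 < i
      · exact if_pos h1
      · have hba : b (m + 1) = a (m + 1) := by
          rw [show m + 1 = i from by omega]
          exact hab.symm
        rw [hval, if_neg h1, hba]
    constructor
    · refine ⟨?_, ?_, ?_⟩
      · rw [hval, if_pos (by omega)]; exact ha.1
      · rw [hval, if_neg (by omega)]; exact hb.2.1
      · intro m hm
        by_cases h2 : m < i
        · rw [hstepeq m h2, hval, if_pos h2]
          exact ha.2.2 m hm
        · rw [hval, hval, if_neg h2, if_neg (show ¬ m + 1 < i by omega)]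
          exact hb.2.2 m hm
    · intro m hm x hx
      by_cases h2 : m < i
      · rw [hstepeq m h2, hval, if_pos h2] at hx
        rw [hval, if_pos h2]
        exact hfa m hm x hx
      · rw [hval, hval, if_neg h2, if_neg (show ¬ m + 1 < i by omega)] at hx
        rw [hval, if_neg h2]
        exact hfb m hm x hx
  obtain ⟨hσcpath, hσcpos⟩ := general ρ ρ' hρpath hρ'path hshρ hflowρ hflowρ'
  obtain ⟨hσdpath, hσdpos⟩ := general ρ' ρ hρ'path hρpath hshρ.symm hflowρ' hflowρ
  obtain ⟨νa, hda, hfa, hpresa, πc, hπcpos, hπcagr⟩ :=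
    key_lemma ν _ hσcpath hσcpos (Fintype.card α) le_rfl ν hν.1 (fun B y => rfl)
  obtain ⟨νb, hdb, hfb, hpresb, πd, hπdpos, hπdagr⟩ :=
    key_lemma ν _ hσdpath hσdpos (Fintype.card α) le_rfl νa hda hfa
  have hπcposb : 0 < νb πc := hpresb πc hπcpos
  have hsh : pathOf πc i = pathOf πd i := by
    rw [hπcagr i (by omega), hπdagr i (by omega)]
    show (if i < i then ρ i else ρ' i) = (if i < i then ρ' i else ρ i)
    rw [if_neg (lt_irrefl i), if_neg (lt_irrefl i)]
    exact hshρ.symm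
  have hπc_im1 : pathOf πc (i - 1) = ρ (i - 1) := by
    rw [hπcagr (i - 1) (by omega)]
    exact if_pos (by omega)
  have hπd_im1 : pathOf πd (i - 1) = ρ' (i - 1) := by
    rw [hπdagr (i - 1) (by omega)]
    exact if_pos (by omega)
  have hπc_j1 : pathOf πc (j + 1) = ρ' (j + 1) := by
    rw [hπcagr (j + 1) (by omega)]
    exact if_neg (by omega)
  have hπd_j1 : pathOf πd (j + 1) = ρ (j + 1) := by
    rw [hπdagr (j + 1) (by omega)]
    exact if_neg (by omega)
  have hπ2_j1 : pathOf (crossOrd πc πd i hsh) (j + 1) = ρ (j + 1) := by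
    rw [pathOf_crossOrd _ _ _ _ (show j + 1 ≤ Fintype.card α from by omega)]
    show (if j + 1 ≤ i then pathOf πc (j + 1) else pathOf πd (j + 1)) = _
    rw [if_neg (by omega)]
    exact hπd_j1
  have hπ2_im1 : pathOf (crossOrd πc πd i hsh) (i - 1) = ρ (i - 1) := by
    rw [pathOf_crossOrd _ _ _ _ (show i - 1 ≤ Fintype.card α from by omega)]
    show (if i - 1 ≤ i then pathOf πc (i - 1) else pathOf πd (i - 1)) = _
    rw [if_pos (by omega)]
    exact hπc_im1
  have hπ3_im1 : pathOf (crossOrd πd πc i hsh.symm) (i - 1) = ρ' (i - 1) := by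
    rw [pathOf_crossOrd _ _ _ _ (show i - 1 ≤ Fintype.card α from by omega)]
    show (if i - 1 ≤ i then pathOf πd (i - 1) else pathOf πc (i - 1)) = _
    rw [if_pos (by omega)]
    exact hπd_im1
  have hπ3_j1 : pathOf (crossOrd πd πc i hsh.symm) (j + 1) = ρ' (j + 1) := by
    rw [pathOf_crossOrd _ _ _ _ (show j + 1 ≤ Fintype.card α from by omega)]
    show (if j + 1 ≤ i then pathOf πd (j + 1) else pathOf πc (j + 1)) = _
    rw [if_neg (by omega)]
    exact hπc_j1
  have dcd : πc ≠ πd := fun he => hne1 (by rw [← hπc_im1, he, hπd_im1])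
  have d2c : crossOrd πc πd i hsh ≠ πc := fun he =>
    hne2 (by rw [← hπ2_j1, he, hπc_j1])
  have d2d : crossOrd πc πd i hsh ≠ πd := fun he =>
    hne1 (by rw [← hπ2_im1, he, hπd_im1])
  have d3c : crossOrd πd πc i hsh.symm ≠ πc := fun he =>
    hne1 (by rw [← hπc_im1, ← he, hπ3_im1])
  have d3d : crossOrd πd πc i hsh.symm ≠ πd := fun he =>
    hne2 (by rw [← hπd_j1, ← he, hπ3_j1])
  have hiden := cross_inM_identity πc πd i hsh
  set ε := min (νb πc) (νb πd) / 2 with hεdef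
  have hmin : 0 < min (νb πc) (νb πd) := lt_min hπcposb hπdpos
  have hε : 0 < ε := by positivity
  have hεc : ε < νb πc := by
    have := min_le_left (νb πc) (νb πd)
    rw [hεdef]; linarith
  have hεd : ε < νb πd := by
    have := min_le_right (νb πc) (νb πd)
    rw [hεdef]; linarith
  refine ⟨νb,
    fun τ => νb τ + ε * combo (crossOrd πc πd i hsh) (crossOrd πd πc i hsh.symm) πc πd τ,
    ?_, rationalizes_of_flowOf_eq hν hdb hfb, ?_⟩
  · intro he
    have hcontr := congrFun he πc
    have hco : combo (crossOrd πc πd i hsh) (crossOrd πd πc i hsh.symm) πc πd πc = -1 := by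
      unfold combo
      rw [if_neg (Ne.symm d2c), if_neg (Ne.symm d3c), if_pos rfl, if_neg dcd]; ring
    rw [hco] at hcontr
    linarith
  · refine rationalizes_of_flowOf_eq hν ⟨?_, ?_⟩ ?_
    · intro τ
      dsimp only
      by_cases heq : τ = πc
      · have hco : combo (crossOrd πc πd i hsh) (crossOrd πd πc i hsh.symm) πc πd τ = -1 := by
          rw [heq]; unfold combo
          rw [if_neg (Ne.symm d2c), if_neg (Ne.symm d3c), if_pos rfl, if_neg dcd]; ring
        rw [hco, heq]; linarith
      by_cases heq' : τ = πd
      · have hco : combo (crossOrd πc πd i hsh) (crossOrd πd πc i hsh.symm) πc πd τ = -1 := by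
          rw [heq']; unfold combo
          rw [if_neg (Ne.symm d2d), if_neg (Ne.symm d3d), if_neg (Ne.symm dcd), if_pos rfl]; ring
        rw [hco, heq']; linarith
      · have hco : 0 ≤ combo (crossOrd πc πd i hsh) (crossOrd πd πc i hsh.symm) πc πd τ := by
          unfold combo
          rw [if_neg heq, if_neg heq']
          have i1 : (0:ℝ) ≤ if τ = crossOrd πc πd i hsh then (1:ℝ) else 0 := by positivity
          have i2 : (0:ℝ) ≤ if τ = crossOrd πd πc i hsh.symm then (1:ℝ) else 0 := by positivity
          linarith
        have hb := hdb.1 τ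
        nlinarith
    · rw [sum_perturb]
      exact hdb.2
    · intro B y
      rw [flowOf_perturb νb ε _ _ πc πd hiden B y, hfb]
end

section
/- (Claim 1) Suppose the probability flow diagram of a rationalizable system of choice probabilities (X,P) has no pair of supported branching paths. Let ρ and ρ' be supported paths that out-branch at index i (that is, A_i^ρ = A_i^{ρ'} and A_{i+1}^ρ ≠ A_{i+1}^{ρ'} for some i ∈ {1,...,|X|-1}). Then for every j ≤ i, no supported path is in-branching with ρ or with ρ' at A_j (i.e., there is no supported path ρ'' with A_j^{ρ''} = A_j^ρ and A_{j-1}^{ρ''} ≠ A_{j-1}^ρ, and similarly for ρ'). -/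
open Finset
open scoped Classical

variable {α : Type*} [Fintype α] [DecidableEq α]

/-- If two paths agree at `a`, differ at `a+1`, and differ somewhere below `a`,
then they form a branching pair. -/
lemma branch_down (σ τ : ℕ → Finset α) (a : ℕ)
    (ha : a ≤ Fintype.card α - 1) (hab : σ a = τ a) (hout : σ (a + 1) ≠ τ (a + 1))
    (u : ℕ) (hu : u < a) (hud : σ u ≠ τ u) : BranchingPair σ τ := by
  classical
  have hPe : σ (Nat.findGreatest (fun m => σ m ≠ τ m) a) ≠
      τ (Nat.findGreatest (fun m => σ m ≠ τ m) a) :=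
    Nat.findGreatest_spec (P := fun m => σ m ≠ τ m) (le_of_lt hu) hud
  set e := Nat.findGreatest (fun m => σ m ≠ τ m) a with he
  have hea : e ≤ a := Nat.findGreatest_le a
  have helt : e < a := lt_of_le_of_ne hea (by intro h; exact hPe (by rw [h]; exact hab))
  refine ⟨e + 1, a, Nat.succ_le_succ (Nat.zero_le e), helt, ha, ?_, hout, ?_⟩
  · simpa using hPe
  · intro m hm1 hm2
    rcases eq_or_lt_of_le hm2 with h | h
    · rw [h]; exact hab
    · have hnot : ¬ (σ m ≠ τ m) :=
        Nat.findGreatest_is_greatest (P := fun m => σ m ≠ τ m)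
          (Nat.lt_of_succ_le hm1) hm2
      exact not_not.mp hnot

/-- If two paths agree at `b`, differ at `b-1`, and differ somewhere above `b`
(at most at `card α`), then they form a branching pair. -/
lemma branch_up (σ τ : ℕ → Finset α) (b : ℕ) (hb1 : 1 ≤ b)
    (hbb : σ b = τ b) (hin : σ (b - 1) ≠ τ (b - 1))
    (u : ℕ) (hu1 : b < u) (hu2 : u ≤ Fintype.card α) (hud : σ u ≠ τ u) :
    BranchingPair σ τ := by
  classical
  have hex : ∃ m, b < m ∧ σ m ≠ τ m := ⟨u, hu1, hud⟩
  obtain ⟨hdb, hdd⟩ := Nat.find_spec hex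
  set d := Nat.find hex with hd
  have hdu : d ≤ u := Nat.find_min' hex ⟨hu1, hud⟩
  have hdpos : 0 < d := lt_of_le_of_lt (Nat.zero_le b) hdb
  refine ⟨b, d - 1, hb1, Nat.le_pred_of_lt hdb, ?_, hin, ?_, ?_⟩
  · exact Nat.sub_le_sub_right (le_trans hdu hu2) 1
  · rw [Nat.sub_add_cancel hdpos]; exact hdd
  · intro m hm1 hm2
    rcases eq_or_lt_of_le hm1 with h | h
    · rw [← h]; exact hbb
    · have hmd : m < d := lt_of_le_of_lt hm2 (Nat.sub_lt hdpos one_pos)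
      by_contra hc
      exact Nat.find_min hex hmd ⟨h, hc⟩

/-- Key lemma: one side of Claim 1. -/
lemma key_no_in_branching (P : Finset α → α → ℝ)
    (hnb : ¬ ∃ ρ ρ' : ℕ → Finset α,
      SupportedPath P ρ ∧ SupportedPath P ρ' ∧ BranchingPair ρ ρ')
    (ρ ρ' : ℕ → Finset α) (hρ : SupportedPath P ρ) (hρ' : SupportedPath P ρ')
    (i : ℕ) (hi2 : i ≤ Fintype.card α - 1)
    (heq : ρ i = ρ' i) (hout : ρ (i + 1) ≠ ρ' (i + 1))
    (j : ℕ) (hj1 : 1 ≤ j) (hji : j ≤ i)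
    (ρ'' : ℕ → Finset α) (hρ'' : SupportedPath P ρ'')
    (hj : ρ'' j = ρ j) (hne : ρ'' (j - 1) ≠ ρ (j - 1)) : False := by
  classical
  by_cases hd : ∃ u, j < u ∧ u ≤ Fintype.card α ∧ ρ'' u ≠ ρ u
  · obtain ⟨u, h1, h2, h3⟩ := hd
    exact hnb ⟨ρ'', ρ, hρ'', hρ, branch_up ρ'' ρ j hj1 hj hne u h1 h2 h3⟩
  · push_neg at hd
    have hcard : 1 ≤ Fintype.card α := by
      by_contra h
      push_neg at h
      interval_cases h' : Fintype.card α <;> omega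
    have hii : i ≤ Fintype.card α := le_trans hi2 (Nat.sub_le _ _)
    have hi1' : i + 1 ≤ Fintype.card α := by omega
    have hagree : ∀ u, j ≤ u → u ≤ Fintype.card α → ρ'' u = ρ u := by
      intro u h1 h2
      rcases eq_or_lt_of_le h1 with h | h
      · rw [← h]; exact hj
      · exact hd u h h2
    have h1 : ρ'' i = ρ' i := (hagree i hji hii).trans heq
    have h2 : ρ'' (i + 1) ≠ ρ' (i + 1) := by
      rw [hagree (i + 1) (by omega) hi1']; exact hout
    by_cases hd2 : ∃ u, u < i ∧ ρ'' u ≠ ρ' u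
    · obtain ⟨u, hu1, hu2⟩ := hd2
      exact hnb ⟨ρ'', ρ', hρ'', hρ', branch_down ρ'' ρ' i hi2 h1 h2 u hu1 hu2⟩
    · push_neg at hd2
      have hji' : j - 1 < i := by omega
      have hne' : ρ (j - 1) ≠ ρ' (j - 1) :=
        fun h => hne ((hd2 (j - 1) hji').trans h.symm)
      exact hnb ⟨ρ, ρ', hρ, hρ', branch_down ρ ρ' i hi2 heq hout (j - 1) hji' hne'⟩

/-- Claim 1: with no pair of supported branching paths, if supported paths `ρ` and `ρ'`
out-branch at index `i`, then for every `j ≤ i` no supported path is in-branching with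
`ρ` or with `ρ'` at `A_j`. -/
theorem no_in_branching_below_out_branch {α : Type*} [Fintype α] [DecidableEq α]
    (P : Finset α → α → ℝ) (hrat : ∃ ν : RankOrd α → ℝ, Rationalizes ν P)
    (hnb : ¬ ∃ ρ ρ' : ℕ → Finset α,
      SupportedPath P ρ ∧ SupportedPath P ρ' ∧ BranchingPair ρ ρ')
    (ρ ρ' : ℕ → Finset α) (hρ : SupportedPath P ρ) (hρ' : SupportedPath P ρ')
    (i : ℕ) (hi1 : 1 ≤ i) (hi2 : i ≤ Fintype.card α - 1)
    (heq : ρ i = ρ' i) (hout : ρ (i + 1) ≠ ρ' (i + 1)) :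
    ∀ j, 1 ≤ j → j ≤ i → ∀ ρ'' : ℕ → Finset α, SupportedPath P ρ'' →
      ¬ ((ρ'' j = ρ j ∧ ρ'' (j - 1) ≠ ρ (j - 1)) ∨
         (ρ'' j = ρ' j ∧ ρ'' (j - 1) ≠ ρ' (j - 1))) := by
  intro j hj1 hji ρ'' hρ'' h
  rcases h with ⟨a, b⟩ | ⟨a, b⟩
  · exact key_no_in_branching P hnb ρ ρ' hρ hρ' i hi2 heq hout j hj1 hji ρ'' hρ'' a b
  · exact key_no_in_branching P hnb ρ' ρ hρ' hρ i hi2 heq.symm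
      (fun h => hout h.symm) j hj1 hji ρ'' hρ'' a b
end

section
/- (Theorem 2) A rationalizing distribution ν for a system of choice probabilities (X,P) is the unique rationalizing distribution if and only if there is no pair of linear orders π, π' with ν(π) > 0 and ν(π') > 0 for which there exist x, y, z ∈ X with x ≠ y satisfying: both π and π' rank x and y above z; the weak upper contour sets of z differ, U_π(z) ≠ U_{π'}(z); and U_π(x) = U_{π'}(y). -/
open Finset
open scoped Classical

variable {α : Type*} [Fintype α] [DecidableEq α]

/-!
Think of an order `π` as the maximal chain of its top sets; `upper π x` is the node that the
chain enters by adding `x`. The choice probabilities `P (Cᶜ ∪ {x}) x` are the cumulative sums of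
the masses of these edges, so by Möbius inversion all rationalizations of `P` have the same edge
masses.

A contour pair consists of two support orders entering the node `B = upper π x = upper π' y`
through different edges and differing below `B`. Exchanging their rankings of `B` gives orders
`σ, σ'` such that `δσ + δσ'` and `δπ + δπ'` induce the same choice probabilities, so shifting a
little mass from `π, π'` to `σ, σ'` produces a second rationalization.

Without contour pairs, support orders meeting at a node through different edges coincide below
it. Consequently an order all of whose edges carry support mass is itself in the support, so
every other rationalization `ν'` is supported inside that of `ν`; and every support order `π`
has an edge used by no other support order, whose mass is then both `ν π` and `ν' π`.
-/

section Ranks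

omit [DecidableEq α]

def topSet (π : RankOrd α) (r : ℕ) : Finset α :=
  univ.filter fun w => r ≤ (π w : ℕ)

@[simp] lemma mem_topSet {π : RankOrd α} {r : ℕ} {w : α} : w ∈ topSet π r ↔ r ≤ (π w : ℕ) := by
  simp [topSet]

lemma upper_eq_topSet (π : RankOrd α) (x : α) : upper π x = topSet π (π x) := rfl

@[simp] lemma mem_upper {π : RankOrd α} {x w : α} : w ∈ upper π x ↔ (π x : ℕ) ≤ π w := by
  simp [upper]

lemma mem_upper_self (π : RankOrd α) (x : α) : x ∈ upper π x := mem_upper.2 le_rfl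

lemma le_iff_of_topSet_eq {π π' : RankOrd α} {r : ℕ} (h : topSet π r = topSet π' r) (w : α) :
    r ≤ (π w : ℕ) ↔ r ≤ (π' w : ℕ) := by
  rw [← mem_topSet, h, mem_topSet]

lemma card_upper (π : RankOrd α) (x : α) : #(upper π x) = Fintype.card α - π x := by
  have : upper π x = (Finset.Ici (π x)).map π.symm.toEmbedding := by
    refine Finset.ext fun w => ?_
    simp only [upper, mem_filter, mem_univ, true_and, mem_map, Finset.mem_Ici,
      Equiv.coe_toEmbedding]
    exact ⟨fun hw => ⟨π w, hw, π.symm_apply_apply w⟩, fun ⟨j, hj, hjw⟩ => by simpa [← hjw]⟩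
  rw [this, card_map, Fin.card_Ici]

lemma rank_eq_of_upper_eq {π π' : RankOrd α} {x y : α} (h : upper π x = upper π' y) :
    π x = π' y := by
  have := card_upper π x
  rw [h, card_upper] at this
  have := (π x).isLt
  have := (π' y).isLt
  ext
  omega

lemma topSet_succ_eq_of_upper_eq {π π' : RankOrd α} {a : α} (h : upper π a = upper π' a) :
    topSet π (π a + 1) = topSet π' (π a + 1) := by
  have hr := rank_eq_of_upper_eq h
  have htop : topSet π (π a) = topSet π' (π a) := by
    rw [← upper_eq_topSet, h, upper_eq_topSet, hr]
  have succ_le_iff (σ : RankOrd α) (hσ : σ a = π a) (w : α) :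
      (π a : ℕ) + 1 ≤ σ w ↔ (π a : ℕ) ≤ σ w ∧ w ≠ a := by
    rw [← σ.injective.ne_iff, Ne, Fin.ext_iff, hσ]
    omega
  ext w
  rw [mem_topSet, mem_topSet, succ_le_iff π rfl, succ_le_iff π' hr.symm, le_iff_of_topSet_eq htop]

def AgreeFrom (r : ℕ) (σ τ : RankOrd α) : Prop :=
  ∀ w, r ≤ (σ w : ℕ) → σ w = τ w

def AgreeBelow (r : ℕ) (σ τ : RankOrd α) : Prop :=
  ∀ w, (σ w : ℕ) < r → σ w = τ w

namespace AgreeFrom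

variable {r : ℕ} {σ τ ρ : RankOrd α}

lemma symm (h : AgreeFrom r σ τ) : AgreeFrom r τ σ := by
  intro w hw
  have hv : r ≤ (σ (σ.symm (τ w)) : ℕ) := by simpa using hw
  have hw' : σ.symm (τ w) = w := τ.injective (by rw [← h _ hv, Equiv.apply_symm_apply])
  rw [← hw', Equiv.apply_symm_apply, ← h _ hv, Equiv.apply_symm_apply]

lemma trans (h₁ : AgreeFrom r σ τ) (h₂ : AgreeFrom r τ ρ) : AgreeFrom r σ ρ := fun w hw =>
  (h₁ w hw).trans (h₂ w (h₁ w hw ▸ hw))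

lemma topSet_eq (h : AgreeFrom r σ τ) : topSet σ r = topSet τ r := by
  ext w
  simp only [mem_topSet]
  exact ⟨fun hw => h w hw ▸ hw, fun hw => h.symm w hw ▸ hw⟩

lemma of_succ (h : AgreeFrom (r + 1) σ τ) {a : α} (ha : σ a = τ a) (har : (σ a : ℕ) = r) :
    AgreeFrom r σ τ := by
  intro w hw
  rcases (Nat.lt_or_eq_of_le hw) with hw | hw
  · exact h w hw
  · rwa [σ.injective (Fin.ext (hw.symm.trans har.symm) : σ w = σ a)]

lemma eq_of_agreeBelow (h : AgreeFrom r σ τ) (h' : AgreeBelow r σ τ) : σ = τ :=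
  Equiv.ext fun w => (le_or_gt r (σ w)).elim (h w) (h' w)

end AgreeFrom

lemma AgreeBelow.trans {r : ℕ} {σ τ ρ : RankOrd α} (h₁ : AgreeBelow r σ τ)
    (h₂ : AgreeBelow r τ ρ) : AgreeBelow r σ ρ := fun w hw =>
  (h₁ w hw).trans (h₂ w (h₁ w hw ▸ hw))

def AgreesBelowMerges (S : Set (RankOrd α)) : Prop :=
  ∀ π ∈ S, ∀ π' ∈ S, ∀ x y, x ≠ y → upper π x = upper π' y → AgreeBelow (π x) π π'

namespace AgreesBelowMerges

variable {S : Set (RankOrd α)}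

theorem agreeFrom_or_agreeBelow (hS : AgreesBelowMerges S) {σ σ' : RankOrd α} (hσ : σ ∈ S)
    (hσ' : σ' ∈ S) (r : ℕ) (h : topSet σ r = topSet σ' r) :
    AgreeFrom r σ σ' ∨ AgreeBelow r σ σ' := by
  by_cases hr : Fintype.card α ≤ r
  · exact .inl fun w hw => absurd (σ w).isLt (by omega)
  obtain ⟨a, ha⟩ := σ.surjective ⟨r, by omega⟩
  obtain ⟨b, hb⟩ := σ'.surjective ⟨r, by omega⟩
  have hab : upper σ a = upper σ' b := by rw [upper_eq_topSet, upper_eq_topSet, ha, hb]; exact h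
  by_cases heq : a = b
  · subst heq
    have hsucc := topSet_succ_eq_of_upper_eq hab
    rw [ha] at hsucc
    rcases hS.agreeFrom_or_agreeBelow hσ hσ' (r + 1) hsucc with h' | h'
    · exact .inl (h'.of_succ (ha.trans hb.symm) (by rw [ha]))
    · exact .inr fun w hw => h' w (by omega)
  · have := hS σ hσ σ' hσ' a b heq hab
    rw [ha] at this
    exact .inr this
termination_by Fintype.card α - r

theorem exists_agreeFrom (hS : AgreesBelowMerges S) (hne : S.Nonempty) {τ : RankOrd α}
    (hτ : ∀ w, ∃ σ ∈ S, upper σ w = upper τ w) (r : ℕ) : ∃ σ ∈ S, AgreeFrom r τ σ := by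
  by_cases hr : Fintype.card α ≤ r
  · obtain ⟨σ, hσ⟩ := hne
    exact ⟨σ, hσ, fun w hw => absurd (τ w).isLt (by omega)⟩
  obtain ⟨σ, hσ, hτσ⟩ := hS.exists_agreeFrom hne hτ (r + 1)
  obtain ⟨w, hw⟩ := τ.surjective ⟨r, by omega⟩
  obtain ⟨ρ, hρ, hρτ⟩ := hτ w
  have hρw : ρ w = τ w := rank_eq_of_upper_eq hρτ
  have hρr : (ρ w : ℕ) = r := by rw [hρw, hw]
  have htop : topSet ρ (r + 1) = topSet σ (r + 1) := by
    rw [← hρr, topSet_succ_eq_of_upper_eq hρτ, hρr]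
    exact hτσ.topSet_eq
  rcases hS.agreeFrom_or_agreeBelow hρ hσ (r + 1) htop with h | h
  · exact ⟨ρ, hρ, (hτσ.trans h.symm).of_succ hρw.symm (by rw [hw])⟩
  · exact ⟨σ, hσ, hτσ.of_succ (by rw [← h w (by omega), hρw]) (by rw [hw])⟩
termination_by Fintype.card α - r

theorem mem_of_forall_upper_eq (hS : AgreesBelowMerges S) (hne : S.Nonempty) {τ : RankOrd α}
    (hτ : ∀ w, ∃ σ ∈ S, upper σ w = upper τ w) : τ ∈ S := by
  obtain ⟨σ, hσ, h⟩ := hS.exists_agreeFrom hne hτ 0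
  rwa [h.eq_of_agreeBelow fun w hw => absurd hw (Nat.not_lt_zero _)]

theorem exists_forall_upper_eq_imp_eq [Nonempty α] (hS : AgreesBelowMerges S) {π : RankOrd α}
    (hπ : π ∈ S) : ∃ w, ∀ ρ ∈ S, upper ρ w = upper π w → ρ = π := by
  -- Take the lowest rank `r` at which the top set of `π` already forces its ranking above `r`.
  -- For `r > 0`, minimality yields an order of `S` entering `topSet π (r - 1)` by another element;
  -- an order using the edge of `π` at rank `r - 1` then agrees with `π` above (by the choice of
  -- `r`) and below (through that merge).
  let Q r := ∀ σ ∈ S, topSet σ r = topSet π r → AgreeFrom r σ π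
  have hQ : ∃ r, Q r := ⟨Fintype.card α, fun σ _ _ w hw => absurd (σ w).isLt (by omega)⟩
  obtain ⟨r, hr, hmin⟩ : ∃ r, Q r ∧ ∀ s < r, ¬Q s :=
    ⟨Nat.find hQ, Nat.find_spec hQ, fun s => Nat.find_min hQ⟩
  cases r with
  | zero =>
    refine ⟨Classical.arbitrary α, fun ρ hρ _ => ?_⟩
    exact (hr ρ hρ (by ext; simp)).eq_of_agreeBelow fun w hw => absurd hw (Nat.not_lt_zero _)
  | succ s =>
    obtain ⟨σ, hσ, hσπ, hσπ'⟩ : ∃ σ ∈ S, topSet σ s = topSet π s ∧ ¬AgreeFrom s σ π := by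
      simpa [Q] using hmin s (lt_add_one s)
    have hs : s < Fintype.card α := by
      by_contra! hs
      exact hσπ' fun w hw => absurd (σ w).isLt (by omega)
    obtain ⟨w, hw⟩ := π.surjective ⟨s, hs⟩
    have agreeFrom_of_upper_eq : ∀ ρ ∈ S, upper ρ w = upper π w → AgreeFrom s ρ π := by
      intro ρ hρ h
      have hρw := rank_eq_of_upper_eq h
      have hsucc := topSet_succ_eq_of_upper_eq h
      rw [hρw, hw] at hsucc
      exact (hr ρ hρ hsucc).of_succ hρw (by rw [hρw, hw])
    obtain ⟨b, hb⟩ := σ.surjective ⟨s, hs⟩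
    have hσb : upper σ b = upper π w := by
      rw [upper_eq_topSet, upper_eq_topSet, hb, hw]; exact hσπ
    have hbw : b ≠ w := by
      rintro rfl
      exact hσπ' (agreeFrom_of_upper_eq σ hσ hσb)
    have hσ_below : AgreeBelow s σ π := (hS.agreeFrom_or_agreeBelow hσ hπ s hσπ).resolve_left hσπ'
    refine ⟨w, fun ρ hρ h => (agreeFrom_of_upper_eq ρ hρ h).eq_of_agreeBelow ?_⟩
    have hρσ := hS ρ hρ σ hσ w b hbw.symm (h.trans hσb.symm)
    rw [rank_eq_of_upper_eq h, hw] at hρσ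
    exact hρσ.trans hσ_below

end AgreesBelowMerges

end Ranks

noncomputable def edgeMass (ν : RankOrd α → ℝ) (x : α) (B : Finset α) : ℝ :=
  ∑ π, if upper π x = B then ν π else 0

lemma sum_Iic_edgeMass (ν : RankOrd α → ℝ) (x : α) (C : Finset α) :
    ∑ D ∈ Iic C, edgeMass ν x D = ∑ π, if upper π x ⊆ C then ν π else 0 := by
  simp only [edgeMass]
  rw [sum_comm]
  refine sum_congr rfl fun π _ => ?_
  simp only [sum_ite_eq, mem_Iic]

lemma Rationalizes.sum_upper_subset {ν : RankOrd α → ℝ} {P : Finset α → α → ℝ}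
    (hν : Rationalizes ν P) (x : α) (C : Finset α) :
    (∑ π, if upper π x ⊆ C then ν π else 0) = if x ∈ C then P (Cᶜ ∪ {x}) x else 0 := by
  split_ifs with hx
  · rw [hν.2 _ ⟨x, by simp⟩ x (by simp), choiceProb]
    refine sum_congr rfl fun π _ => if_congr ⟨fun h y hy hyx => ?_, fun h w hw => ?_⟩ rfl rfl
    · have hyC : y ∉ C := by simpa [hyx] using hy
      by_contra hle
      exact hyC (h (mem_upper.2 (by omega)))
    · by_contra hwC
      have := h w (by simp [hwC]) (by rintro rfl; exact hwC hx)
      rw [mem_upper] at hw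
      omega
  · exact sum_eq_zero fun π _ => if_neg fun h => hx (h (mem_upper_self π x))

theorem Rationalizes.edgeMass_eq {ν ν' : RankOrd α → ℝ} {P : Finset α → α → ℝ}
    (hν : Rationalizes ν P) (hν' : Rationalizes ν' P) (x : α) (B : Finset α) :
    edgeMass ν x B = edgeMass ν' x B := by
  have moebius {μ : RankOrd α → ℝ} (hμ : Rationalizes μ P) :
      edgeMass μ x B = ∑ D ∈ Iic B,
        IncidenceAlgebra.mu ℝ D B * if x ∈ D then P (Dᶜ ∪ {x}) x else 0 :=
    IncidenceAlgebra.moebius_inversion_bot _ _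
      (fun C => by rw [sum_Iic_edgeMass, hμ.sum_upper_subset]) B
  rw [moebius hν, moebius hν']

lemma le_edgeMass {μ : RankOrd α → ℝ} (hμ : ∀ π, 0 ≤ μ π) (π : RankOrd α) (x : α) :
    μ π ≤ edgeMass μ x (upper π x) := by
  have := single_le_sum (f := fun ρ => if upper ρ x = upper π x then μ ρ else 0)
    (fun ρ _ => by split_ifs; exacts [hμ ρ, le_rfl]) (mem_univ π)
  simpa [edgeMass] using this

lemma exists_pos_of_edgeMass_pos {μ : RankOrd α → ℝ} {x : α} {B : Finset α}
    (h : 0 < edgeMass μ x B) : ∃ π, 0 < μ π ∧ upper π x = B := by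
  obtain ⟨π, -, hπ⟩ := exists_lt_of_sum_lt (s := univ) (f := fun _ => (0 : ℝ))
    (by simpa [edgeMass] using h)
  split_ifs at hπ with hπx
  exacts [⟨π, hπ, hπx⟩, absurd hπ (lt_irrefl 0)]

lemma edgeMass_upper_eq {μ : RankOrd α → ℝ} {π : RankOrd α} {x : α}
    (h : ∀ ρ, μ ρ ≠ 0 → upper ρ x = upper π x → ρ = π) :
    edgeMass μ x (upper π x) = μ π := by
  rw [edgeMass, sum_eq_single π (fun ρ _ hρπ => ?_) (by simp), if_pos rfl]
  split_ifs with hρ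
  · by_contra hne
    exact hρπ (h ρ hne hρ)
  · rfl

lemma IsDist.exists_pos {ν : RankOrd α → ℝ} (hν : IsDist ν) : ∃ π, 0 < ν π := by
  obtain ⟨π, -, hπ⟩ := exists_lt_of_sum_lt (s := univ) (f := fun _ => (0 : ℝ)) (g := ν)
    (by simp [hν.2])
  exact ⟨π, hπ⟩

theorem Rationalizes.eq_of_agreesBelowMerges {ν ν' : RankOrd α → ℝ} {P : Finset α → α → ℝ}
    (hν : Rationalizes ν P) (hν' : Rationalizes ν' P)
    (hS : AgreesBelowMerges {π | 0 < ν π}) : ν' = ν := by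
  have support_subset (τ : RankOrd α) (hτ : 0 < ν' τ) : 0 < ν τ := by
    refine hS.mem_of_forall_upper_eq hν.1.exists_pos fun w => exists_pos_of_edgeMass_pos ?_
    rw [hν.edgeMass_eq hν']
    exact hτ.trans_le (le_edgeMass hν'.1.1 τ w)
  funext π
  rcases (hν.1.1 π).eq_or_lt with hπ | hπ
  · rw [← hπ]
    exact le_antisymm (not_lt.1 fun h => (support_subset π h).ne hπ) (hν'.1.1 π)
  cases isEmpty_or_nonempty α
  · rw [← Fintype.sum_subsingleton ν' π, ← Fintype.sum_subsingleton ν π, hν.1.2, hν'.1.2]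
  obtain ⟨w, hw⟩ := hS.exists_forall_upper_eq_imp_eq hπ
  calc ν' π = edgeMass ν' w (upper π w) :=
        (edgeMass_upper_eq fun ρ hρ h => hw ρ (support_subset ρ ((hν'.1.1 ρ).lt_of_ne' hρ)) h).symm
    _ = edgeMass ν w (upper π w) := (hν.edgeMass_eq hν' w _).symm
    _ = ν π := edgeMass_upper_eq fun ρ hρ h => hw ρ ((hν.1.1 ρ).lt_of_ne' hρ) h

section Linearity

variable (A : Finset α) (x : α)

lemma choiceProb_add (ν₁ ν₂ : RankOrd α → ℝ) :
    choiceProb (ν₁ + ν₂) A x = choiceProb ν₁ A x + choiceProb ν₂ A x := by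
  simp only [choiceProb, Pi.add_apply, ← sum_add_distrib, ite_add_ite, add_zero]

lemma choiceProb_sub (ν₁ ν₂ : RankOrd α → ℝ) :
    choiceProb (ν₁ - ν₂) A x = choiceProb ν₁ A x - choiceProb ν₂ A x := by
  simp only [choiceProb, Pi.sub_apply, ← sum_sub_distrib, ite_sub_ite, sub_zero]

lemma choiceProb_smul (c : ℝ) (ν : RankOrd α → ℝ) :
    choiceProb (c • ν) A x = c * choiceProb ν A x := by
  simp only [choiceProb, Pi.smul_apply, smul_eq_mul, mul_sum, mul_ite, mul_zero]

lemma choiceProb_single (π : RankOrd α) (c : ℝ) :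
    choiceProb (Pi.single π c) A x =
      if ∀ y ∈ A, y ≠ x → (π y : ℕ) < (π x : ℕ) then c else 0 := by
  rw [choiceProb, sum_eq_single π (fun ρ _ hρ => by simp [hρ]) (by simp)]
  simp

end Linearity

theorem Rationalizes.exists_ne_of_choiceProb_eq {ν : RankOrd α → ℝ} {P : Finset α → α → ℝ}
    (hν : Rationalizes ν P) {π π' σ σ' : RankOrd α} (hπ : 0 < ν π) (hπ' : 0 < ν π')
    (hππ' : π ≠ π') (hσ : σ ≠ π) (hσ' : σ' ≠ π)
    (hswap : ∀ A x, choiceProb (Pi.single σ 1 + Pi.single σ' 1) A x =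
      choiceProb (Pi.single π 1 + Pi.single π' 1) A x) :
    ∃ ν'', Rationalizes ν'' P ∧ ν'' ≠ ν := by
  set ε := min (ν π) (ν π')
  have hε : 0 < ε := lt_min hπ hπ'
  set c : RankOrd α → ℝ := Pi.single σ 1 + Pi.single σ' 1 - (Pi.single π 1 + Pi.single π' 1)
  refine ⟨ν + ε • c, ⟨⟨fun ρ => ?_, ?_⟩, fun A hA x hx => ?_⟩, fun h => ?_⟩
  · have := hν.1.1 ρ
    have := min_le_left (ν π) (ν π')
    have := min_le_right (ν π) (ν π')
    simp only [c, Pi.add_apply, Pi.smul_apply, Pi.sub_apply, Pi.single_apply, smul_eq_mul]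
    split_ifs <;> subst_vars <;> first | exact absurd rfl hππ' | nlinarith
  · simp [c, sum_add_distrib, sum_sub_distrib, ← mul_sum, hν.1.2]
  · rw [hν.2 A hA x hx, choiceProb_add, choiceProb_smul, choiceProb_sub, hswap, sub_self,
      mul_zero, add_zero]
  · have := congrFun h π
    simp [c, hσ.symm, hσ'.symm, hππ'] at this
    exact hε.ne' this

section Splice

omit [DecidableEq α]

def splice (π π' : RankOrd α) (m : ℕ) (h : topSet π m = topSet π' m) : RankOrd α where
  toFun w := if m ≤ (π w : ℕ) then π' w else π w
  invFun j := if m ≤ (j : ℕ) then π'.symm j else π.symm j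
  left_inv w := by
    by_cases hw : m ≤ (π w : ℕ)
    · simp [hw, (le_iff_of_topSet_eq h w).1 hw]
    · simp [hw]
  right_inv j := by
    by_cases hj : m ≤ (j : ℕ)
    · simp [hj, (le_iff_of_topSet_eq h (π'.symm j)).2 (by simpa using hj)]
    · simp [hj]

variable {π π' : RankOrd α} {m : ℕ} (h : topSet π m = topSet π' m)

lemma splice_apply (w : α) :
    splice π π' m h w = if m ≤ (π w : ℕ) then π' w else π w := rfl

lemma splice_lt_splice_iff_of_le {x : α} (hx : m ≤ (π x : ℕ))
    (y : α) : (splice π π' m h y : ℕ) < splice π π' m h x ↔ (π' y : ℕ) < π' x := by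
  have := le_iff_of_topSet_eq h y
  have := (le_iff_of_topSet_eq h x).1 hx
  rw [splice_apply, splice_apply, if_pos hx]
  split_ifs <;> omega

lemma splice_lt_splice_iff_of_lt {x : α} (hx : (π x : ℕ) < m)
    (y : α) : (splice π π' m h y : ℕ) < splice π π' m h x ↔ (π y : ℕ) < π x := by
  have := le_iff_of_topSet_eq h y
  rw [splice_apply, splice_apply, if_neg hx.not_ge]
  split_ifs <;> omega

end Splice

lemma choiceProb_single_congr {σ π : RankOrd α} {x : α}
    (h : ∀ y, (σ y : ℕ) < σ x ↔ (π y : ℕ) < π x) (A : Finset α) (c : ℝ) :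
    choiceProb (Pi.single σ c) A x = choiceProb (Pi.single π c) A x := by
  simp only [choiceProb_single, h]

lemma choiceProb_splice_add_splice {π π' : RankOrd α} {m : ℕ} (h : topSet π m = topSet π' m)
    (A : Finset α) (x : α) :
    choiceProb (Pi.single (splice π π' m h) 1 + Pi.single (splice π' π m h.symm) 1) A x =
      choiceProb (Pi.single π 1 + Pi.single π' 1) A x := by
  rw [choiceProb_add, choiceProb_add]
  by_cases hx : m ≤ (π x : ℕ)
  · have hx' := (le_iff_of_topSet_eq h x).1 hx
    rw [choiceProb_single_congr (splice_lt_splice_iff_of_le h hx),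
      choiceProb_single_congr (splice_lt_splice_iff_of_le h.symm hx'), add_comm]
  · have hx' := (le_iff_of_topSet_eq h x).not.1 hx
    rw [choiceProb_single_congr (splice_lt_splice_iff_of_lt h (not_le.1 hx)),
      choiceProb_single_congr (splice_lt_splice_iff_of_lt h.symm (not_le.1 hx'))]

theorem Rationalizes.exists_ne_of_merge {ν : RankOrd α → ℝ} {P : Finset α → α → ℝ}
    (hν : Rationalizes ν P) {π π' : RankOrd α} {x y z : α} (hπ : 0 < ν π) (hπ' : 0 < ν π')
    (hxy : x ≠ y) (hzx : (π z : ℕ) < π x) (hz : upper π z ≠ upper π' z)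
    (hxy' : upper π x = upper π' y) :
    ∃ ν'', Rationalizes ν'' P ∧ ν'' ≠ ν := by
  have hrank : π x = π' y := rank_eq_of_upper_eq hxy'
  have htop : topSet π (π x) = topSet π' (π x) := by
    rw [← upper_eq_topSet, hxy', upper_eq_topSet, hrank]
  refine hν.exists_ne_of_choiceProb_eq hπ hπ' (by rintro rfl; exact hz rfl) ?_ ?_
    (choiceProb_splice_add_splice htop)
  · intro he
    have hy : (π x : ℕ) ≤ π y := mem_upper.1 (by rw [hxy']; exact mem_upper_self π' y)
    have := DFunLike.congr_fun he y
    rw [splice_apply, if_pos hy] at this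
    exact hxy (π.injective (hrank.trans this))
  · intro he
    have below (w : α) (hw : ¬ (π x : ℕ) ≤ π' w) : π' w = π w := by
      have := DFunLike.congr_fun he w
      rwa [splice_apply, if_neg hw] at this
    apply hz
    have hz' : π' z = π z := below z (by rw [← le_iff_of_topSet_eq htop]; omega)
    ext w
    simp only [mem_upper, hz']
    by_cases hw : (π x : ℕ) ≤ π' w
    · have := (le_iff_of_topSet_eq htop w).2 hw
      omega
    · rw [below w hw]

/-- Theorem 2: a rationalizing distribution `ν` is the unique rationalization iff there
is no pair of orders in its support satisfying the contour-set conditions. -/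
theorem unique_iff_no_contour_pair {α : Type*} [Fintype α] [DecidableEq α]
    (P : Finset α → α → ℝ) (ν : RankOrd α → ℝ) (hν : Rationalizes ν P) :
    (∀ ν' : RankOrd α → ℝ, Rationalizes ν' P → ν' = ν) ↔
      ¬ ∃ (π π' : RankOrd α) (x y z : α),
        0 < ν π ∧ 0 < ν π' ∧ x ≠ y ∧
        (π z : ℕ) < (π x : ℕ) ∧ (π z : ℕ) < (π y : ℕ) ∧
        (π' z : ℕ) < (π' x : ℕ) ∧ (π' z : ℕ) < (π' y : ℕ) ∧
        upper π z ≠ upper π' z ∧ upper π x = upper π' y := by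
  constructor
  · rintro huniq ⟨π, π', x, y, z, hπ, hπ', hxy, hzx, -, -, -, hz, hxy'⟩
    obtain ⟨ν'', hν'', hne⟩ := hν.exists_ne_of_merge hπ hπ' hxy hzx hz hxy'
    exact hne (huniq ν'' hν'')
  · intro hno ν' hν'
    refine hν.eq_of_agreesBelowMerges hν' fun π hπ π' hπ' x y hxy hxy' z hzx => ?_
    have hzy' : (π' z : ℕ) < π' y := by
      simpa using (by rw [← hxy', mem_upper]; omega : z ∉ upper π' y)
    have hxy_le : (π x : ℕ) ≤ π y := mem_upper.1 (by rw [hxy']; exact mem_upper_self π' y)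
    have hyx_le : (π' y : ℕ) ≤ π' x := mem_upper.1 (by rw [← hxy']; exact mem_upper_self π x)
    by_contra hne
    exact hno ⟨π, π', x, y, z, hπ, hπ', hxy, hzx, by omega, by omega, hzy',
      fun h => hne (rank_eq_of_upper_eq h), hxy'⟩
end

section
/- (Theorem 3) Let (X,P) be a rationalizable system of choice probabilities. Every rationalizing distribution has the same support if and only if (X,P) has a unique rationalizing distribution. Equivalently: if there exist two distinct rationalizing distributions, then there exist two rationalizing distributions with different supports. -/
open Finset
open scoped Classical

variable {α : Type*} [Fintype α] [DecidableEq α]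

/-!
The rationalizing distributions of `P` form a convex polytope cut out by linear equations and
the inequalities `0 ≤ ν π`. If `ν₁ ≠ ν₂` both rationalize `P`, move from `ν₁` along the line
through `ν₂` until the first coordinate that is positive at `ν₁` hits zero; the point reached
still rationalizes `P` but has a smaller support than `ν₁`.
-/

section Extrapolation

variable {ι 𝕜 : Type*} [Fintype ι] [Field 𝕜] [LinearOrder 𝕜] [IsStrictOrderedRing 𝕜]

theorem exists_lt_of_sum_eq_of_ne {f g : ι → 𝕜} (hsum : ∑ i, f i = ∑ i, g i) (hne : f ≠ g) :
    ∃ i, g i < f i := by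
  by_contra! hle
  exact hne (funext fun i => (sum_eq_sum_iff_of_le fun i _ => hle i).1 hsum i (mem_univ i))

theorem exists_nonneg_add_mul_sub_eq_zero {f g : ι → 𝕜} (hf : ∀ i, 0 ≤ f i) (hg : ∀ i, 0 ≤ g i)
    (hlt : ∃ i, g i < f i) :
    ∃ t i, 0 < f i ∧ f i + t * (g i - f i) = 0 ∧ ∀ j, 0 ≤ f j + t * (g j - f j) := by
  set S := univ.filter fun i => g i < f i
  have hS : S.Nonempty := by simpa [S, Finset.Nonempty] using hlt
  obtain ⟨i, hiS, hmin⟩ := S.exists_min_image (fun i => f i / (f i - g i)) hS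
  have hgap : ∀ {j}, j ∈ S → 0 < f j - g j := fun hj => sub_pos.2 (mem_filter.1 hj).2
  have hpos : 0 < f i := (hg i).trans_lt (mem_filter.1 hiS).2
  refine ⟨f i / (f i - g i), i, hpos, ?_, fun j => ?_⟩
  · field_simp [(hgap hiS).ne']
    ring
  · by_cases hj : j ∈ S
    · have := (le_div_iff₀ (hgap hj)).1 (hmin j hj)
      linarith
    · have : f j ≤ g j := by simpa [S] using hj
      have ht : 0 ≤ f i / (f i - g i) := div_nonneg hpos.le (hgap hiS).le
      exact add_nonneg (hf j) (mul_nonneg ht (sub_nonneg.2 this))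

end Extrapolation

theorem choiceProb_add_mul_sub (ν₁ ν₂ : RankOrd α → ℝ) (t : ℝ) (A : Finset α) (x : α) :
    choiceProb (fun π => ν₁ π + t * (ν₂ π - ν₁ π)) A x
      = choiceProb ν₁ A x + t * (choiceProb ν₂ A x - choiceProb ν₁ A x) := by
  simp only [choiceProb, ← sum_sub_distrib, mul_sum, ← sum_add_distrib]
  refine sum_congr rfl fun π _ => ?_
  split_ifs <;> ring

theorem Rationalizes.add_mul_sub {ν₁ ν₂ : RankOrd α → ℝ} {P : Finset α → α → ℝ} {t : ℝ}
    (h₁ : Rationalizes ν₁ P) (h₂ : Rationalizes ν₂ P)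
    (hnonneg : ∀ π, 0 ≤ ν₁ π + t * (ν₂ π - ν₁ π)) :
    Rationalizes (fun π => ν₁ π + t * (ν₂ π - ν₁ π)) P := by
  refine ⟨⟨hnonneg, ?_⟩, fun A hA x hx => ?_⟩
  · rw [sum_add_distrib, ← mul_sum, sum_sub_distrib, h₁.1.2, h₂.1.2]
    ring
  · rw [choiceProb_add_mul_sub, ← h₁.2 A hA x hx, ← h₂.2 A hA x hx]
    ring

theorem same_support_iff_unique_general {α : Type*} [Fintype α] [DecidableEq α]
    (P : Finset α → α → ℝ) :
    (∀ ν₁ ν₂ : RankOrd α → ℝ, Rationalizes ν₁ P → Rationalizes ν₂ P →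
      ∀ π, (0 < ν₁ π ↔ 0 < ν₂ π)) ↔
    (∀ ν₁ ν₂ : RankOrd α → ℝ, Rationalizes ν₁ P → Rationalizes ν₂ P → ν₁ = ν₂) := by
  refine ⟨fun hsame ν₁ ν₂ h₁ h₂ => ?_, fun huniq ν₁ ν₂ h₁ h₂ π => by rw [huniq ν₁ ν₂ h₁ h₂]⟩
  by_contra hne
  obtain ⟨t, π, hpos, hzero, hnonneg⟩ := exists_nonneg_add_mul_sub_eq_zero h₁.1.1 h₂.1.1
    (exists_lt_of_sum_eq_of_ne (h₁.1.2.trans h₂.1.2.symm) hne)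
  exact (hsame ν₁ _ h₁ (h₁.add_mul_sub h₂ hnonneg) π |>.1 hpos).ne' hzero

/-- Theorem 3: every rationalizing distribution has the same support iff the system of
choice probabilities has a unique rationalizing distribution. -/
theorem same_support_iff_unique {α : Type*} [Fintype α] [DecidableEq α]
    (P : Finset α → α → ℝ) (hrat : ∃ ν : RankOrd α → ℝ, Rationalizes ν P) :
    (∀ ν₁ ν₂ : RankOrd α → ℝ, Rationalizes ν₁ P → Rationalizes ν₂ P →
      ∀ π, (0 < ν₁ π ↔ 0 < ν₂ π)) ↔
    (∀ ν₁ ν₂ : RankOrd α → ℝ, Rationalizes ν₁ P → Rationalizes ν₂ P → ν₁ = ν₂) :=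
  same_support_iff_unique_general P
end
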